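/- arXiv:math/0511028 — 4 statements merged into one kernel-verified Lean document; each statement's English description precedes it below -/
import Mathlib

section
/- Suppose in addition that: (i) q is continuous and positive on ℝ; (ii) there exist a ≥ 1, b > 0 and a bounded interval (α,β) such that for every x ∉ (α,β) and every t with |t−x| ≤ b·r(x)/q(x) one has 1/a ≤ r(t)/r(x) ≤ a and 1/a ≤ q(t)/q(x) ≤ a; (iii) a²·exp(−b/a²) ≤ 1/3. Then the boundary value problem −r(x)y′(x)+q(x)y(x)=f(x), lim_{|x|→∞} y(x)=0, is correctly solvable in C(ℝ) if and only if q(x) → ∞ as |x| → ∞. -/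
/-!
Let `Q` be the primitive of `q / r` and `E = exp (-Q)`, so that `(y E)' = -E f / r` for every
solution `y`. Condition (ii) makes `Q` grow by at least `b / a²` over each step of length
`b r(x) / q(x)` taken outside `(α, β)`, hence `Q → ±∞` at `±∞`.

If `q → ∞` at both ends, `y(x) = exp (Q x) ∫_x^∞ E f / r` solves the problem. Since
`∫_x^∞ E q / r = E x`, this is an average of `f / q` over `[x, ∞)`, which gives
`|y| ≤ sup |f| / inf q` as well as `y → 0` at both ends. Any two solutions differ by a multiple
of `exp Q`, which does not tend to `0` at `+∞` unless it vanishes.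

Conversely, let `y` solve the problem for `f = 1`. Then `y E` is antitone and tends to `0`,
so `y(x) E(x) ≥ ∫_x^{x+d} E / r` with `d = b r(x) / q(x)`. On that step `r` grows at most by the
factor `a` and `Q` at most by `a² b`, so `q(x) y(x) ≥ b e^{-a² b} / a` outside `(α, β)`, and
`y → 0` forces `q → ∞`.
-/

open MeasureTheory Filter Set Real
open scoped ENNReal NNReal

noncomputable section

/-- `y` is a solution of the boundary value problem `-r·y' + q·y = f` on `ℝ` with
`y → 0` at `±∞`: `y` is continuous, locally absolutely continuous (encoded through the
integral identity, i.e. `y` is the integral of its a.e. derivative `(q·y - f)/r`),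
and tends to `0` at both infinities. -/
def IsSolution (r q f y : ℝ → ℝ) : Prop :=
  Continuous y ∧
  (∀ a b : ℝ, y b - y a = ∫ t in a..b, (q t * y t - f t) / r t) ∧
  Tendsto y atBot (nhds 0) ∧ Tendsto y atTop (nhds 0)

/-- Correct solvability of the problem `-r·y' + q·y = f`, `y(±∞) = 0`, in `C(ℝ)`
(bounded continuous functions with the sup-norm): for every bounded continuous `f`
there is a unique solution `y` (such a solution is automatically bounded and
continuous), and `sup|y| ≤ c·sup|f|` with a constant `c ∈ (0,∞)` independent of `f`. -/
def CorrectlySolvableC (r q : ℝ → ℝ) : Prop :=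
  ∃ c : ℝ, 0 < c ∧
    ∀ f : ℝ → ℝ, Continuous f → (∃ M : ℝ, ∀ x, |f x| ≤ M) →
      (∃! y : ℝ → ℝ, IsSolution r q f y) ∧
      ∀ y : ℝ → ℝ, IsSolution r q f y → ∀ x, |y x| ≤ c * ⨆ t, |f t|

open scoped Topology

lemma tendsto_atTop_of_forall_exists_add_le {F : ℝ → ℝ} (hF : Monotone F) {X δ : ℝ}
    (hδ : 0 < δ) (h : ∀ x, X ≤ x → ∃ z, x ≤ z ∧ F x + δ ≤ F z) : Tendsto F atTop atTop := by
  have gain : ∀ n : ℕ, ∃ x, X ≤ x ∧ F X + n * δ ≤ F x := by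
    intro n
    induction n with
    | zero => exact ⟨X, le_rfl, by simp⟩
    | succ n ih =>
      obtain ⟨x, hXx, hFx⟩ := ih
      obtain ⟨z, hxz, hFz⟩ := h x hXx
      exact ⟨z, hXx.trans hxz, by push_cast; linarith⟩
  rw [tendsto_atTop]
  intro M
  obtain ⟨n, hn⟩ := exists_nat_ge ((M - F X) / δ)
  obtain ⟨x, -, hFx⟩ := gain n
  rw [div_le_iff₀ hδ] at hn
  filter_upwards [eventually_ge_atTop x] with z hz
  linarith [hF hz]

lemma tendsto_atTop_of_le_mul {ι : Type*} {l : Filter ι} {f g : ι → ℝ} {K : ℝ} (hK : 0 < K)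
    (hf : ∀ᶠ i in l, 0 < f i) (hfg : ∀ᶠ i in l, K ≤ f i * g i) (hg : Tendsto g l (𝓝 0)) :
    Tendsto f l atTop := by
  have hgpos : ∀ᶠ i in l, 0 < g i := by
    filter_upwards [hf, hfg] with i hfi hfgi
    exact pos_of_mul_pos_right (hK.trans_le hfgi) hfi.le
  have hinv : Tendsto (fun i => K * (g i)⁻¹) l atTop :=
    (tendsto_nhdsWithin_iff.2 ⟨hg, hgpos⟩).inv_tendsto_nhdsGT_zero.const_mul_atTop hK
  refine tendsto_atTop_mono' l ?_ hinv
  filter_upwards [hgpos, hfg] with i hgi hfgi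
  rwa [← div_eq_mul_inv, div_le_iff₀ hgi]

lemma tendsto_zero_of_forall_eventually_abs_le {ι : Type*} {l : Filter ι} {y : ι → ℝ} {B : ℝ}
    (h : ∀ ν > 0, ∀ᶠ i in l, |y i| ≤ B / ν) : Tendsto y l (𝓝 0) := by
  rw [Metric.tendsto_nhds]
  intro ε hε
  have hν : 0 < (|B| + 1) / ε := by positivity
  filter_upwards [h _ hν] with i hi
  rw [Real.dist_eq, sub_zero]
  calc |y i| ≤ B / ((|B| + 1) / ε) := hi
    _ = B / (|B| + 1) * ε := by field_simp
    _ < ε := by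
      have : B / (|B| + 1) < 1 := by
        rw [div_lt_one (by positivity)]; linarith [le_abs_self B]
      nlinarith

lemma mul_le_intervalIntegral {f : ℝ → ℝ} {u v m : ℝ} (huv : u ≤ v)
    (hf : IntervalIntegrable f volume u v) (h : ∀ t ∈ Icc u v, m ≤ f t) :
    (v - u) * m ≤ ∫ t in u..v, f t := by
  simpa using intervalIntegral.integral_mono_on huv intervalIntegrable_const hf h

lemma intervalIntegral_le_mul {f : ℝ → ℝ} {u v M : ℝ} (huv : u ≤ v)
    (hf : IntervalIntegrable f volume u v) (h : ∀ t ∈ Icc u v, f t ≤ M) :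
    ∫ t in u..v, f t ≤ (v - u) * M := by
  simpa using intervalIntegral.integral_mono_on huv hf intervalIntegrable_const h

def qrIntegral (r q : ℝ → ℝ) (x : ℝ) : ℝ := ∫ t in (0 : ℝ)..x, q t / r t

def integratingFactor (r q : ℝ → ℝ) (x : ℝ) : ℝ := exp (-qrIntegral r q x)

section Primitive

variable {r q : ℝ → ℝ} (hr : Continuous r) (hrpos : ∀ x, 0 < r x) (hqc : Continuous q)
  (hqpos : ∀ x, 0 < q x)

include hr hrpos hqc

lemma continuous_div_of_pos : Continuous fun t => q t / r t :=
  hqc.div hr fun x => (hrpos x).ne'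

lemma hasDerivAt_qrIntegral (x : ℝ) : HasDerivAt (qrIntegral r q) (q x / r x) x :=
  let hc := continuous_div_of_pos hr hrpos hqc
  intervalIntegral.integral_hasDerivAt_right (hc.intervalIntegrable 0 x)
    hc.stronglyMeasurable.stronglyMeasurableAtFilter hc.continuousAt

lemma continuous_qrIntegral : Continuous (qrIntegral r q) :=
  continuous_iff_continuousAt.2 fun x => (hasDerivAt_qrIntegral hr hrpos hqc x).continuousAt

lemma qrIntegral_sub (u v : ℝ) : qrIntegral r q v - qrIntegral r q u = ∫ t in u..v, q t / r t :=
  let hc := continuous_div_of_pos hr hrpos hqc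
  intervalIntegral.integral_interval_sub_left (hc.intervalIntegrable 0 v)
    (hc.intervalIntegrable 0 u)

include hqpos in
lemma strictMono_qrIntegral : StrictMono (qrIntegral r q) :=
  strictMono_of_deriv_pos fun x => by
    rw [(hasDerivAt_qrIntegral hr hrpos hqc x).deriv]
    exact div_pos (hqpos x) (hrpos x)

lemma hasDerivAt_integratingFactor (x : ℝ) :
    HasDerivAt (integratingFactor r q) (-(integratingFactor r q x * (q x / r x))) x := by
  have h := ((hasDerivAt_qrIntegral hr hrpos hqc x).neg).exp
  rw [mul_neg] at h
  exact h

lemma continuous_integratingFactor : Continuous (integratingFactor r q) :=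
  continuous_exp.comp (continuous_qrIntegral hr hrpos hqc).neg

omit hr hrpos hqc in
lemma integratingFactor_pos (x : ℝ) : 0 < integratingFactor r q x := exp_pos _

omit hr hrpos hqc in
lemma tendsto_integratingFactor_atTop (hQ : Tendsto (qrIntegral r q) atTop atTop) :
    Tendsto (integratingFactor r q) atTop (𝓝 0) :=
  tendsto_exp_atBot.comp (tendsto_neg_atTop_atBot.comp hQ)

end Primitive

def LocallyComparable (r q : ℝ → ℝ) (a b α β : ℝ) : Prop :=
  ∀ x, x ∉ Ioo α β → ∀ t, |t - x| ≤ b * r x / q x →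
    1 / a ≤ r t / r x ∧ r t / r x ≤ a ∧ 1 / a ≤ q t / q x ∧ q t / q x ≤ a

namespace LocallyComparable

variable {r q : ℝ → ℝ} {a b α β : ℝ} (hcond : LocallyComparable r q a b α β)
  (hr : Continuous r) (hrpos : ∀ x, 0 < r x) (hqc : Continuous q) (hqpos : ∀ x, 0 < q x)
  {x t : ℝ} (hx : x ∉ Ioo α β) (ht : t ∈ Icc (x - b * r x / q x) (x + b * r x / q x))
include hcond hrpos hx ht

lemma le_mul : r t ≤ a * r x := by
  have h := (hcond x hx t (abs_sub_comm t x ▸ mem_Icc_iff_abs_le.2 ht)).2.1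
  rwa [div_le_iff₀ (hrpos x)] at h

include hqpos

lemma div_le_sq_mul : q t / r t ≤ a ^ 2 * (q x / r x) := by
  obtain ⟨hr₁, hr₂, -, hq₂⟩ := hcond x hx t (abs_sub_comm t x ▸ mem_Icc_iff_abs_le.2 ht)
  have hrx := hrpos x; have hrt := hrpos t; have hqx := hqpos x
  have ha : 0 < a := (div_pos hrt hrx).trans_le hr₂
  calc q t / r t = (q t / q x) / (r t / r x) * (q x / r x) := by field_simp
    _ ≤ a / (1 / a) * (q x / r x) := by gcongr
    _ = a ^ 2 * (q x / r x) := by field_simp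

lemma div_div_sq_le : q x / r x / a ^ 2 ≤ q t / r t := by
  obtain ⟨-, hr₂, hq₁, -⟩ := hcond x hx t (abs_sub_comm t x ▸ mem_Icc_iff_abs_le.2 ht)
  have hrx := hrpos x; have hrt := hrpos t; have hqt := hqpos t
  have ha : 0 < a := (div_pos hrt hrx).trans_le hr₂
  calc q x / r x / a ^ 2 = (r t / r x) / (q t / q x) * (q t / r t) / a ^ 2 := by field_simp
    _ ≤ a / (1 / a) * (q t / r t) / a ^ 2 := by gcongr
    _ = q t / r t := by field_simp

omit ht
include hr hqc

lemma qrIntegral_sub_le (hxt : x ≤ t) (htx : t ≤ x + b * r x / q x) :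
    qrIntegral r q t - qrIntegral r q x ≤ a ^ 2 * b := by
  rw [qrIntegral_sub hr hrpos hqc]
  calc ∫ s in x..t, q s / r s ≤ (t - x) * (a ^ 2 * (q x / r x)) :=
        intervalIntegral_le_mul hxt ((continuous_div_of_pos hr hrpos hqc).intervalIntegrable _ _)
          fun s hs => hcond.div_le_sq_mul hrpos hqpos hx
            ⟨by linarith [hs.1], by linarith [hs.2]⟩
    _ ≤ b * r x / q x * (a ^ 2 * (q x / r x)) := by
        have := hrpos x; have := hqpos x
        gcongr
        linarith
    _ = a ^ 2 * b := by have := hrpos x; have := hqpos x; field_simp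

lemma le_qrIntegral_sub {u v : ℝ} (huv : u ≤ v)
    (hsub : Icc u v ⊆ Icc (x - b * r x / q x) (x + b * r x / q x)) :
    (v - u) * (q x / r x / a ^ 2) ≤ qrIntegral r q v - qrIntegral r q u := by
  rw [qrIntegral_sub hr hrpos hqc]
  exact mul_le_intervalIntegral huv ((continuous_div_of_pos hr hrpos hqc).intervalIntegrable _ _)
    fun t ht => hcond.div_div_sq_le hrpos hqpos hx (hsub ht)

omit hx
variable (hb : 0 < b) (ha : 0 < a)
include hb ha

lemma tendsto_qrIntegral_atTop : Tendsto (qrIntegral r q) atTop atTop := by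
  refine tendsto_atTop_of_forall_exists_add_le (strictMono_qrIntegral hr hrpos hqc hqpos).monotone
    (by positivity : 0 < b / a ^ 2) (X := β) fun x hx => ?_
  have hrx := hrpos x; have hqx := hqpos x
  have hd : 0 < b * r x / q x := by positivity
  refine ⟨x + b * r x / q x, by linarith, ?_⟩
  have step := hcond.le_qrIntegral_sub hr hrpos hqc hqpos (fun h => h.2.not_ge hx)
    (by linarith : x ≤ x + b * r x / q x) (Icc_subset_Icc (by linarith) le_rfl)
  rw [add_sub_cancel_left, show b * r x / q x * (q x / r x / a ^ 2) = b / a ^ 2 by field_simp]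
    at step
  linarith

lemma tendsto_qrIntegral_atBot : Tendsto (qrIntegral r q) atBot atBot := by
  have hmono : Monotone fun x => -qrIntegral r q (-x) := fun s t hst =>
    neg_le_neg ((strictMono_qrIntegral hr hrpos hqc hqpos).monotone (neg_le_neg hst))
  have hF : Tendsto (fun x => -qrIntegral r q (-x)) atTop atTop := by
    refine tendsto_atTop_of_forall_exists_add_le hmono (by positivity : 0 < b / a ^ 2) (X := -α)
      fun x hx => ?_
    have hrx := hrpos (-x); have hqx := hqpos (-x)
    have hd : 0 < b * r (-x) / q (-x) := by positivity
    refine ⟨x + b * r (-x) / q (-x), by linarith, ?_⟩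
    have step := hcond.le_qrIntegral_sub hr hrpos hqc hqpos (fun h => h.1.not_ge (by linarith))
      (by linarith : -x - b * r (-x) / q (-x) ≤ -x) (Icc_subset_Icc le_rfl (by linarith))
    rw [sub_sub_cancel,
      show b * r (-x) / q (-x) * (q (-x) / r (-x) / a ^ 2) = b / a ^ 2 by field_simp] at step
    simp only [neg_add, ← sub_eq_add_neg]
    linarith
  simpa [Function.comp_def] using tendsto_neg_atTop_atBot.comp (hF.comp tendsto_neg_atBot_atTop)

end LocallyComparable

section Solutions

variable {r q : ℝ → ℝ} (hr : Continuous r) (hrpos : ∀ x, 0 < r x) (hqc : Continuous q)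
include hr hrpos hqc

lemma IsSolution.hasDerivAt {f y : ℝ → ℝ} (hy : IsSolution r q f y) (hf : Continuous f) (x : ℝ) :
    HasDerivAt y ((q x * y x - f x) / r x) x := by
  have hg : Continuous fun t => (q t * y t - f t) / r t :=
    ((hqc.mul hy.1).sub hf).div hr fun t => (hrpos t).ne'
  refine ((intervalIntegral.integral_hasDerivAt_right (hg.intervalIntegrable 0 x)
    hg.stronglyMeasurable.stronglyMeasurableAtFilter hg.continuousAt).const_add
      (y 0)).congr_of_eventuallyEq (.of_forall fun v => ?_)
  linarith [hy.2.1 0 v]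

lemma IsSolution.integral_le_mul_integratingFactor {y : ℝ → ℝ}
    (hy : IsSolution r q (fun _ => 1) y) (hQ : Tendsto (qrIntegral r q) atTop atTop) (u v : ℝ) :
    ∫ t in u..v, integratingFactor r q t / r t ≤ y u * integratingFactor r q u := by
  have hw (x : ℝ) : HasDerivAt (fun s => y s * integratingFactor r q s)
      (-(integratingFactor r q x / r x)) x :=
    ((hy.hasDerivAt hr hrpos hqc continuous_const x).mul
      (hasDerivAt_integratingFactor hr hrpos hqc x)).congr_deriv (by
        have := (hrpos x).ne'
        field_simp
        ring)
  have hanti : Antitone fun s => y s * integratingFactor r q s :=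
    antitone_of_deriv_nonpos (fun x => (hw x).differentiableAt) fun x => by
      rw [(hw x).deriv, neg_nonpos]
      exact div_nonneg (integratingFactor_pos x).le (hrpos x).le
  have hlim : Tendsto (fun s => y s * integratingFactor r q s) atTop (𝓝 0) := by
    simpa using hy.2.2.2.mul (tendsto_integratingFactor_atTop hQ)
  have hint := intervalIntegral.integral_eq_sub_of_hasDerivAt (a := u) (b := v) (fun x _ => hw x)
    (((continuous_integratingFactor hr hrpos hqc).div hr fun t => (hrpos t).ne').neg
      |>.intervalIntegrable _ _)
  rw [intervalIntegral.integral_neg] at hint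
  linarith [hanti.le_of_tendsto hlim v]

end Solutions

namespace LocallyComparable

variable {r q : ℝ → ℝ} {a b α β : ℝ} (hcond : LocallyComparable r q a b α β)
  (hr : Continuous r) (hrpos : ∀ x, 0 < r x) (hqc : Continuous q) (hqpos : ∀ x, 0 < q x)
  (hb : 0 < b) (ha : 0 < a)
include hcond hr hrpos hqc hqpos hb ha

lemma le_mul_of_isSolution_one {y : ℝ → ℝ} (hy : IsSolution r q (fun _ => 1) y) {x : ℝ}
    (hx : x ∉ Ioo α β) : b * exp (-(a ^ 2 * b)) / a ≤ q x * y x := by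
  set d := b * r x / q x with hd_def
  have hrx := hrpos x; have hqx := hqpos x
  have hEx := integratingFactor_pos (r := r) (q := q) x
  have hd : 0 < d := by positivity
  have hlow : ∀ t ∈ Icc x (x + d),
      integratingFactor r q x * exp (-(a ^ 2 * b)) / (a * r x) ≤ integratingFactor r q t / r t := by
    intro t ht
    have hEt : integratingFactor r q x * exp (-(a ^ 2 * b)) ≤ integratingFactor r q t := by
      simp only [integratingFactor, ← exp_add]
      exact exp_le_exp.2 (by linarith [hcond.qrIntegral_sub_le hr hrpos hqc hqpos hx ht.1 ht.2])
    have hrt : r t ≤ a * r x := hcond.le_mul hrpos hx (Icc_subset_Icc (by linarith) le_rfl ht)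
    exact div_le_div₀ (integratingFactor_pos t).le hEt (hrpos t) hrt
  have key := (mul_le_intervalIntegral (by linarith)
    (((continuous_integratingFactor hr hrpos hqc).div hr fun t => (hrpos t).ne').intervalIntegrable
      _ _) hlow).trans
    (hy.integral_le_mul_integratingFactor hr hrpos hqc
      (hcond.tendsto_qrIntegral_atTop hr hrpos hqc hqpos hb ha) x (x + d))
  rw [add_sub_cancel_left, show d * (integratingFactor r q x * exp (-(a ^ 2 * b)) / (a * r x)) =
    b * exp (-(a ^ 2 * b)) / a / q x * integratingFactor r q x by rw [hd_def]; field_simp] at key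
  rw [← div_le_iff₀' hqx]
  exact le_of_mul_le_mul_right key hEx

lemma tendsto_atTop_of_correctlySolvableC (hs : CorrectlySolvableC r q) :
    Tendsto q atTop atTop ∧ Tendsto q atBot atTop := by
  obtain ⟨_, -, H⟩ := hs
  obtain ⟨⟨y, hy, -⟩, -⟩ := H (fun _ => 1) continuous_const ⟨1, by simp⟩
  have hK : 0 < b * exp (-(a ^ 2 * b)) / a := by positivity
  have bound : ∀ x, x ∉ Ioo α β → b * exp (-(a ^ 2 * b)) / a ≤ q x * y x :=
    fun x => hcond.le_mul_of_isSolution_one hr hrpos hqc hqpos hb ha hy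
  constructor
  · refine tendsto_atTop_of_le_mul hK (.of_forall hqpos) ?_ hy.2.2.2
    filter_upwards [eventually_ge_atTop β] with x hx using bound x fun h => h.2.not_ge hx
  · refine tendsto_atTop_of_le_mul hK (.of_forall hqpos) ?_ hy.2.2.1
    filter_upwards [eventually_le_atBot α] with x hx using bound x fun h => h.1.not_ge hx

end LocallyComparable

lemma exists_pos_forall_le_of_tendsto {q : ℝ → ℝ} (hqc : Continuous q) (hqpos : ∀ x, 0 < q x)
    (htop : Tendsto q atTop atTop) (hbot : Tendsto q atBot atTop) : ∃ μ > 0, ∀ x, μ ≤ q x := by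
  obtain ⟨x₀, hx₀⟩ := hqc.exists_forall_le (by rw [cocompact_eq_atBot_atTop]; exact hbot.sup htop)
  exact ⟨q x₀, hqpos x₀, hx₀⟩

def tailIntegral (r q f : ℝ → ℝ) (x : ℝ) : ℝ :=
  ∫ t in Ioi x, integratingFactor r q t * (f t / r t)

def explicitSolution (r q f : ℝ → ℝ) (x : ℝ) : ℝ :=
  exp (qrIntegral r q x) * tailIntegral r q f x

lemma exp_qrIntegral_mul_integratingFactor (r q : ℝ → ℝ) (x : ℝ) :
    exp (qrIntegral r q x) * integratingFactor r q x = 1 := by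
  rw [integratingFactor, ← exp_add, add_neg_cancel, exp_zero]

lemma abs_integratingFactor_mul_div_le {r q f : ℝ → ℝ} (hrpos : ∀ x, 0 < r x) {B ν t : ℝ}
    (hfB : |f t| ≤ B) (hν : 0 < ν) (hνq : ν ≤ q t) :
    |integratingFactor r q t * (f t / r t)| ≤ B / ν * (integratingFactor r q t * (q t / r t)) := by
  have hrt := hrpos t
  have hE := integratingFactor_pos (r := r) (q := q) t
  calc |integratingFactor r q t * (f t / r t)| = integratingFactor r q t * (|f t| / r t) := by
        rw [abs_mul, abs_div, abs_of_pos hE, abs_of_pos hrt]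
    _ ≤ integratingFactor r q t * (B / ν * q t / r t) := by
        gcongr
        rw [div_mul_eq_mul_div, le_div_iff₀ hν]
        exact (mul_le_mul_of_nonneg_right hfB hν.le).trans
          (mul_le_mul_of_nonneg_left hνq ((abs_nonneg _).trans hfB))
    _ = B / ν * (integratingFactor r q t * (q t / r t)) := by ring

section Construction

variable {r q : ℝ → ℝ} (hr : Continuous r) (hrpos : ∀ x, 0 < r x) (hqc : Continuous q)
  (hqpos : ∀ x, 0 < q x) (hQ : Tendsto (qrIntegral r q) atTop atTop)
include hr hrpos hqc hqpos hQ

lemma integrableOn_Ioi_integratingFactor_mul (x : ℝ) :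
    IntegrableOn (fun t => integratingFactor r q t * (q t / r t)) (Ioi x) :=
  integrableOn_Ioi_deriv_of_nonneg' (g := fun t => -integratingFactor r q t)
    (fun t _ => (hasDerivAt_integratingFactor hr hrpos hqc t).neg.congr_deriv (neg_neg _))
    (fun t _ => mul_nonneg (integratingFactor_pos t).le (div_pos (hqpos t) (hrpos t)).le)
    (by simpa using (tendsto_integratingFactor_atTop hQ).neg)

lemma integral_Ioi_integratingFactor_mul (x : ℝ) :
    ∫ t in Ioi x, integratingFactor r q t * (q t / r t) = integratingFactor r q x :=
  (integral_Ioi_of_hasDerivAt_of_nonneg' (g := fun t => -integratingFactor r q t)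
    (fun t _ => (hasDerivAt_integratingFactor hr hrpos hqc t).neg.congr_deriv (neg_neg _))
    (fun t _ => mul_nonneg (integratingFactor_pos t).le (div_pos (hqpos t) (hrpos t)).le)
    (by simpa using (tendsto_integratingFactor_atTop hQ).neg)).trans (by ring)

variable {f : ℝ → ℝ} {B : ℝ} (hfB : ∀ t, |f t| ≤ B)
include hfB

lemma abs_tailIntegral_le {ν x : ℝ} (hν : 0 < ν) (hνq : ∀ t > x, ν ≤ q t) :
    |tailIntegral r q f x| ≤ B / ν * integratingFactor r q x := by
  rw [← integral_Ioi_integratingFactor_mul hr hrpos hqc hqpos hQ x, ← integral_const_mul]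
  exact norm_integral_le_of_norm_le (f := fun t => integratingFactor r q t * (f t / r t))
    ((integrableOn_Ioi_integratingFactor_mul hr hrpos hqc hqpos hQ x).const_mul _)
    ((ae_restrict_iff' measurableSet_Ioi).2 (.of_forall fun t ht =>
      abs_integratingFactor_mul_div_le hrpos (hfB t) hν (hνq t ht)))

lemma abs_explicitSolution_le {ν x : ℝ} (hν : 0 < ν) (hνq : ∀ t > x, ν ≤ q t) :
    |explicitSolution r q f x| ≤ B / ν := by
  rw [explicitSolution, abs_mul, abs_of_pos (exp_pos _)]
  calc exp (qrIntegral r q x) * |tailIntegral r q f x|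
      ≤ exp (qrIntegral r q x) * (B / ν * integratingFactor r q x) := by
        gcongr; exact abs_tailIntegral_le hr hrpos hqc hqpos hQ hfB hν hνq
    _ = B / ν := by rw [mul_left_comm, exp_qrIntegral_mul_integratingFactor, mul_one]

variable (hf : Continuous f) {μ : ℝ} (hμ : 0 < μ) (hqμ : ∀ x, μ ≤ q x)
include hf hμ hqμ

lemma integrableOn_Ioi_integratingFactor_mul_div (x : ℝ) :
    IntegrableOn (fun t => integratingFactor r q t * (f t / r t)) (Ioi x) :=
  ((integrableOn_Ioi_integratingFactor_mul hr hrpos hqc hqpos hQ x).const_mul (B / μ)).mono'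
    ((continuous_integratingFactor hr hrpos hqc).mul
      (hf.div hr fun t => (hrpos t).ne')).aestronglyMeasurable
    (.of_forall fun t => abs_integratingFactor_mul_div_le hrpos (hfB t) hμ (hqμ t))

lemma hasDerivAt_tailIntegral (x : ℝ) :
    HasDerivAt (tailIntegral r q f) (-(integratingFactor r q x * (f x / r x))) x := by
  have hg : Continuous fun t => integratingFactor r q t * (f t / r t) :=
    (continuous_integratingFactor hr hrpos hqc).mul (hf.div hr fun t => (hrpos t).ne')
  refine ((intervalIntegral.integral_hasDerivAt_right (hg.intervalIntegrable 0 x)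
    hg.stronglyMeasurable.stronglyMeasurableAtFilter hg.continuousAt).const_sub
      (tailIntegral r q f 0)).congr_of_eventuallyEq (.of_forall fun v => ?_)
  have hint := integrableOn_Ioi_integratingFactor_mul_div hr hrpos hqc hqpos hQ hfB hf hμ hqμ
  rw [tailIntegral, tailIntegral, ← intervalIntegral.integral_interval_add_Ioi (hint 0) (hint v)]
  ring

lemma hasDerivAt_explicitSolution (x : ℝ) :
    HasDerivAt (explicitSolution r q f) ((q x * explicitSolution r q f x - f x) / r x) x :=
  ((hasDerivAt_qrIntegral hr hrpos hqc x).exp.mul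
    (hasDerivAt_tailIntegral hr hrpos hqc hqpos hQ hfB hf hμ hqμ x)).congr_deriv (by
      rw [explicitSolution]
      linear_combination (-(f x / r x)) * exp_qrIntegral_mul_integratingFactor r q x)

lemma abs_explicitSolution_le_add {ν x m : ℝ} (hxm : x ≤ m) (hν : 0 < ν)
    (hνq : ∀ t ∈ Icc x m, ν ≤ q t) :
    |explicitSolution r q f x| ≤ B / ν + exp (qrIntegral r q x) * |tailIntegral r q f m| := by
  have hint := integrableOn_Ioi_integratingFactor_mul_div hr hrpos hqc hqpos hQ hfB hf hμ hqμ
  have hweight := integrableOn_Ioi_integratingFactor_mul hr hrpos hqc hqpos hQ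
  have hsplit : tailIntegral r q f x =
      (∫ t in x..m, integratingFactor r q t * (f t / r t)) + tailIntegral r q f m :=
    (intervalIntegral.integral_interval_add_Ioi (hint x) (hint m)).symm
  have hmass : ∫ t in x..m, integratingFactor r q t * (q t / r t) =
      integratingFactor r q x - integratingFactor r q m := by
    rw [← integral_Ioi_integratingFactor_mul hr hrpos hqc hqpos hQ x,
      ← integral_Ioi_integratingFactor_mul hr hrpos hqc hqpos hQ m,
      ← intervalIntegral.integral_interval_add_Ioi (hweight x) (hweight m), add_sub_cancel_right]
  have hnear : |∫ t in x..m, integratingFactor r q t * (f t / r t)| ≤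
      B / ν * integratingFactor r q x := by
    have hbound := intervalIntegral.norm_integral_le_of_norm_le hxm
      (f := fun t => integratingFactor r q t * (f t / r t))
      (g := fun t => B / ν * (integratingFactor r q t * (q t / r t)))
      (.of_forall fun t ht => abs_integratingFactor_mul_div_le hrpos (hfB t) hν
        (hνq t (Ioc_subset_Icc_self ht)))
      ((((continuous_integratingFactor hr hrpos hqc).mul
        (continuous_div_of_pos hr hrpos hqc)).intervalIntegrable (μ := volume) x m).const_mul
          (B / ν))
    rw [Real.norm_eq_abs, intervalIntegral.integral_const_mul, hmass] at hbound
    have := integratingFactor_pos (r := r) (q := q) m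
    have : 0 ≤ B / ν := div_nonneg ((abs_nonneg _).trans (hfB 0)) hν.le
    nlinarith
  rw [explicitSolution, hsplit, mul_add]
  calc _ ≤ |exp (qrIntegral r q x) * ∫ t in x..m, integratingFactor r q t * (f t / r t)| +
        |exp (qrIntegral r q x) * tailIntegral r q f m| := abs_add_le _ _
    _ ≤ exp (qrIntegral r q x) * (B / ν * integratingFactor r q x) +
        exp (qrIntegral r q x) * |tailIntegral r q f m| := by
      rw [abs_mul, abs_mul, abs_of_pos (exp_pos _)]
      gcongr
    _ = B / ν + exp (qrIntegral r q x) * |tailIntegral r q f m| := by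
      rw [mul_left_comm, exp_qrIntegral_mul_integratingFactor, mul_one]

lemma isSolution_explicitSolution (hQbot : Tendsto (qrIntegral r q) atBot atBot)
    (htop : Tendsto q atTop atTop) (hbot : Tendsto q atBot atTop) :
    IsSolution r q f (explicitSolution r q f) := by
  have hderiv := hasDerivAt_explicitSolution hr hrpos hqc hqpos hQ hfB hf hμ hqμ
  have hcont : Continuous (explicitSolution r q f) :=
    continuous_iff_continuousAt.2 fun x => (hderiv x).continuousAt
  refine ⟨hcont, fun u v => (intervalIntegral.integral_eq_sub_of_hasDerivAt (fun x _ => hderiv x)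
    ((((hqc.mul hcont).sub hf).div hr fun t => (hrpos t).ne').intervalIntegrable u v)).symm, ?_, ?_⟩
  · refine tendsto_zero_of_forall_eventually_abs_le (B := B + 1) fun ν hν => ?_
    obtain ⟨m, hm⟩ := eventually_atBot.1 (hbot.eventually_ge_atTop ν)
    have hfar : ∀ᶠ x in atBot, exp (qrIntegral r q x) * |tailIntegral r q f m| < 1 / ν := by
      refine (tendsto_order.1 ?_).2 _ (by positivity)
      simpa using (tendsto_exp_atBot.comp hQbot).mul_const |tailIntegral r q f m|
    filter_upwards [hfar, eventually_le_atBot m] with x hx hxm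
    calc |explicitSolution r q f x| ≤ B / ν + exp (qrIntegral r q x) * |tailIntegral r q f m| :=
          abs_explicitSolution_le_add hr hrpos hqc hqpos hQ hfB hf hμ hqμ hxm hν
            fun t ht => hm t ht.2
      _ ≤ (B + 1) / ν := by rw [add_div]; linarith
  · refine tendsto_zero_of_forall_eventually_abs_le (B := B) fun ν hν => ?_
    obtain ⟨X, hX⟩ := eventually_atTop.1 (htop.eventually_ge_atTop ν)
    filter_upwards [eventually_ge_atTop X] with x hx
    exact abs_explicitSolution_le hr hrpos hqc hqpos hQ hfB hν fun t ht => hX t (hx.trans ht.le)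

end Construction

section Uniqueness

variable {r q : ℝ → ℝ} (hr : Continuous r) (hrpos : ∀ x, 0 < r x) (hqc : Continuous q)
include hr hrpos hqc

lemma IsSolution.sub {f y₁ y₂ : ℝ → ℝ} (hf : Continuous f) (h₁ : IsSolution r q f y₁)
    (h₂ : IsSolution r q f y₂) : IsSolution r q (fun _ => 0) (y₁ - y₂) := by
  have hint {y : ℝ → ℝ} (hy : Continuous y) (u v : ℝ) :
      IntervalIntegrable (fun t => (q t * y t - f t) / r t) volume u v :=
    (((hqc.mul hy).sub hf).div hr fun t => (hrpos t).ne').intervalIntegrable u v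
  refine ⟨h₁.1.sub h₂.1, fun u v => ?_,
    sub_self (0 : ℝ) ▸ h₁.2.2.1.sub h₂.2.2.1, sub_self (0 : ℝ) ▸ h₁.2.2.2.sub h₂.2.2.2⟩
  rw [Pi.sub_apply, Pi.sub_apply, sub_sub_sub_comm, h₁.2.1, h₂.2.1,
    ← intervalIntegral.integral_sub (hint h₁.1 u v) (hint h₂.1 u v)]
  congr 1 with t
  simp only [Pi.sub_apply]
  ring

lemma IsSolution.eq_zero (hqpos : ∀ x, 0 < q x) {z : ℝ → ℝ} (hz : IsSolution r q (fun _ => 0) z) :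
    z = 0 := by
  have hw (x : ℝ) : HasDerivAt (fun s => z s * integratingFactor r q s) 0 x :=
    ((hz.hasDerivAt hr hrpos hqc continuous_const x).mul
      (hasDerivAt_integratingFactor hr hrpos hqc x)).congr_deriv (by
        have := (hrpos x).ne'
        field_simp
        ring)
  obtain ⟨c, hz_eq⟩ : ∃ c, ∀ x, z x = c * exp (qrIntegral r q x) := by
    refine ⟨z 0 * integratingFactor r q 0, fun x => ?_⟩
    rw [← is_const_of_deriv_eq_zero (fun s => (hw s).differentiableAt) (fun s => (hw s).deriv) x 0,
      mul_assoc, mul_comm (integratingFactor r q x), exp_qrIntegral_mul_integratingFactor, mul_one]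
  have hc : |c| * exp (qrIntegral r q 0) ≤ 0 := by
    refine ge_of_tendsto (by simpa using hz.2.2.2.abs) ?_
    filter_upwards [eventually_ge_atTop 0] with x hx
    rw [hz_eq x, abs_mul, abs_of_pos (exp_pos _)]
    gcongr
    exact (strictMono_qrIntegral hr hrpos hqc hqpos).monotone hx
  have hc0 : c = 0 := abs_eq_zero.1 (le_antisymm
    (nonpos_of_mul_nonpos_left hc (exp_pos _)) (abs_nonneg c))
  funext x
  rw [hz_eq x, hc0, zero_mul, Pi.zero_apply]

lemma IsSolution.unique (hqpos : ∀ x, 0 < q x) {f y₁ y₂ : ℝ → ℝ} (hf : Continuous f)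
    (h₁ : IsSolution r q f y₁) (h₂ : IsSolution r q f y₂) : y₁ = y₂ :=
  sub_eq_zero.1 ((h₁.sub hr hrpos hqc hf h₂).eq_zero hr hrpos hqc hqpos)

end Uniqueness

lemma correctlySolvableC_of_tendsto {r q : ℝ → ℝ} (hr : Continuous r) (hrpos : ∀ x, 0 < r x)
    (hqc : Continuous q) (hqpos : ∀ x, 0 < q x)
    (hQtop : Tendsto (qrIntegral r q) atTop atTop) (hQbot : Tendsto (qrIntegral r q) atBot atBot)
    (htop : Tendsto q atTop atTop) (hbot : Tendsto q atBot atTop) : CorrectlySolvableC r q := by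
  obtain ⟨μ, hμ, hqμ⟩ := exists_pos_forall_le_of_tendsto hqc hqpos htop hbot
  refine ⟨1 / μ, by positivity, fun f hf ⟨M, hM⟩ => ?_⟩
  have hfB (t : ℝ) : |f t| ≤ ⨆ s, |f s| := le_ciSup ⟨M, forall_mem_range.2 hM⟩ t
  have hsol := isSolution_explicitSolution hr hrpos hqc hqpos hQtop hfB hf hμ hqμ hQbot htop hbot
  refine ⟨⟨_, hsol, fun y hy => hy.unique hr hrpos hqc hqpos hf hsol⟩, fun y hy x => ?_⟩
  rw [hy.unique hr hrpos hqc hqpos hf hsol, one_div_mul_eq_div]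
  exact abs_explicitSolution_le hr hrpos hqc hqpos hQtop hfB hμ fun t _ => hqμ t

theorem stmt2_general (r q : ℝ → ℝ) (hr : Continuous r) (hrpos : ∀ x, 0 < r x)
    (hqc : Continuous q) (hqpos : ∀ x, 0 < q x)
    (a b α β : ℝ) (ha : 1 ≤ a) (hb : 0 < b)
    (hcond : ∀ x, x ∉ Set.Ioo α β → ∀ t, |t - x| ≤ b * r x / q x →
      1 / a ≤ r t / r x ∧ r t / r x ≤ a ∧ 1 / a ≤ q t / q x ∧ q t / q x ≤ a) :
    CorrectlySolvableC r q ↔ (Tendsto q atTop atTop ∧ Tendsto q atBot atTop) := by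
  have hcond : LocallyComparable r q a b α β := hcond
  have ha : 0 < a := zero_lt_one.trans_le ha
  refine ⟨hcond.tendsto_atTop_of_correctlySolvableC hr hrpos hqc hqpos hb ha,
    fun ⟨htop, hbot⟩ => ?_⟩
  exact correctlySolvableC_of_tendsto hr hrpos hqc hqpos
    (hcond.tendsto_qrIntegral_atTop hr hrpos hqc hqpos hb ha)
    (hcond.tendsto_qrIntegral_atBot hr hrpos hqc hqpos hb ha) htop hbot

theorem stmt2 (r q : ℝ → ℝ) (hr : Continuous r) (hrpos : ∀ x, 0 < r x)
    (hq : LocallyIntegrable q volume) (hqnn : ∀ x, 0 ≤ q x)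
    (hqc : Continuous q) (hqpos : ∀ x, 0 < q x)
    (a b α β : ℝ) (ha : 1 ≤ a) (hb : 0 < b)
    (hcond : ∀ x, x ∉ Set.Ioo α β → ∀ t, |t - x| ≤ b * r x / q x →
      1 / a ≤ r t / r x ∧ r t / r x ≤ a ∧ 1 / a ≤ q t / q x ∧ q t / q x ≤ a)
    (hγ : a ^ 2 * Real.exp (-b / a ^ 2) ≤ 1 / 3) :
    CorrectlySolvableC r q ↔ (Tendsto q atTop atTop ∧ Tendsto q atBot atTop) :=
  stmt2_general r q hr hrpos hqc hqpos a b α β ha hb hcond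
end
end

section
/- The two conditions S₁ = ∞ and d₀ := sup_{x∈ℝ} d(x) < ∞ hold together if and only if there exists a ∈ (0,∞) such that B(a) := inf_{x∈ℝ} ∫_{x−a}^{x+a} q(t)/r(t) dt > 0. -/
open MeasureTheory Filter Set Real
open scoped ENNReal NNReal

noncomputable section

/-- `S₁ = ∫_{-∞}^0 q(t)/r(t) dt`, as a (possibly infinite) lower Lebesgue integral. -/
def S1E (r q : ℝ → ℝ) : ℝ≥0∞ :=
  ∫⁻ t in Set.Iio (0 : ℝ), ENNReal.ofReal (q t / r t)

/-- The auxiliary function `d(x) = inf { d > 0 : ∫_{x-d}^{x+d} q(t)/r(t) dt = 2 }`. -/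
def dfun (r q : ℝ → ℝ) (x : ℝ) : ℝ :=
  sInf {d : ℝ | 0 < d ∧ (∫ t in (x - d)..(x + d), q t / r t) = 2}

theorem stmt5 (r q : ℝ → ℝ) (hr : Continuous r) (hrpos : ∀ x, 0 < r x)
    (hq : LocallyIntegrable q volume) (hqnn : ∀ x, 0 ≤ q x) :
    (S1E r q = ⊤ ∧ BddAbove (Set.range (dfun r q))) ↔
      ∃ a : ℝ, 0 < a ∧ 0 < ⨅ x : ℝ, ∫ t in (x - a)..(x + a), q t / r t := by
  -- basic integrability of g = q/r
  have hgnn : ∀ t, 0 ≤ q t / r t := fun t => div_nonneg (hqnn t) (hrpos t).le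
  have hgint : ∀ a b : ℝ, IntervalIntegrable (fun t => q t / r t) volume a b := by
    intro a b
    rw [intervalIntegrable_iff]
    have h1 : IntegrableOn (fun t => q t * (r t)⁻¹) (Set.uIcc a b) volume :=
      (hq.integrableOn_isCompact isCompact_uIcc).mul_continuousOn
        ((hr.inv₀ fun x => (hrpos x).ne').continuousOn) isCompact_uIcc
    simpa [div_eq_mul_inv] using h1.mono_set Set.uIoc_subset_uIcc
  -- primitive
  set P : ℝ → ℝ := fun y => ∫ t in (0:ℝ)..y, q t / r t with hPdef
  have hPcont : Continuous P := intervalIntegral.continuous_primitive hgint 0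
  have hPsub : ∀ u v : ℝ, P v - P u = ∫ t in u..v, q t / r t := fun u v =>
    intervalIntegral.integral_interval_sub_left (hgint 0 v) (hgint 0 u)
  have hPmono : Monotone P := by
    intro u v huv
    have h0 : 0 ≤ P v - P u := by
      rw [hPsub]
      exact intervalIntegral.integral_nonneg huv fun t _ => hgnn t
    linarith
  -- set-lintegral over an open interval equals ofReal of the interval integral
  have key : ∀ u v : ℝ, u ≤ v →
      (∫⁻ t in Set.Ioo u v, ENNReal.ofReal (q t / r t)) = ENNReal.ofReal (P v - P u) := by
    intro u v huv
    have hint : IntegrableOn (fun t => q t / r t) (Set.Ioo u v) volume :=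
      ((hgint u v).1).mono_set Set.Ioo_subset_Ioc_self
    rw [hPsub u v, intervalIntegral.integral_of_le huv,
      MeasureTheory.integral_Ioc_eq_integral_Ioo]
    exact (MeasureTheory.ofReal_integral_eq_lintegral_ofReal hint
      (ae_of_all _ fun t => hgnn t)).symm
  -- decomposition of S1E as a sup
  have hS1 : S1E r q = ⨆ n : ℕ, ENNReal.ofReal (P 0 - P (-(n : ℝ))) := by
    have hunion : Set.Iio (0 : ℝ) = ⋃ n : ℕ, Set.Ico (-(n : ℝ) - 1) (-(n : ℝ)) := by
      ext t
      simp only [Set.mem_Iio, Set.mem_iUnion, Set.mem_Ico]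
      constructor
      · intro ht
        have hpos : 0 < -t := by linarith
        have hk1 : 1 ≤ ⌈-t⌉₊ := Nat.one_le_iff_ne_zero.mpr (Nat.ceil_pos.mpr hpos).ne'
        refine ⟨⌈-t⌉₊ - 1, ?_, ?_⟩
        · have hle : -t ≤ (⌈-t⌉₊ : ℝ) := Nat.le_ceil _
          have hcast : ((⌈-t⌉₊ - 1 : ℕ) : ℝ) = (⌈-t⌉₊ : ℝ) - 1 := by
            push_cast [hk1]; ring
          rw [hcast]; linarith
        · have hlt : ((⌈-t⌉₊ - 1 : ℕ) : ℝ) < -t :=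
            Nat.lt_ceil.mp (Nat.sub_lt (lt_of_lt_of_le one_pos hk1) one_pos)
          linarith
      · rintro ⟨n, _, h2⟩
        have : (0 : ℝ) ≤ n := Nat.cast_nonneg n
        linarith
    have hdisj : Pairwise (Function.onFun Disjoint
        fun n : ℕ => Set.Ico (-(n : ℝ) - 1) (-(n : ℝ))) := by
      have hkey : ∀ m n : ℕ, m < n →
          Disjoint (Set.Ico (-(m : ℝ) - 1) (-(m : ℝ))) (Set.Ico (-(n : ℝ) - 1) (-(n : ℝ))) := by
        intro m n hmn
        apply Set.disjoint_left.mpr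
        intro t htm htn
        have : (m : ℝ) + 1 ≤ n := by exact_mod_cast hmn
        have h1 := htm.1
        have h2 := htn.2
        linarith
      intro m n hmn
      rcases hmn.lt_or_gt with h | h
      · exact hkey m n h
      · exact (hkey n m h).symm
    rw [S1E, hunion, MeasureTheory.lintegral_iUnion (fun n => measurableSet_Ico) hdisj]
    have heach : ∀ n : ℕ,
        (∫⁻ t in Set.Ico (-(n : ℝ) - 1) (-(n : ℝ)), ENNReal.ofReal (q t / r t)) =
          ENNReal.ofReal (P (-(n : ℝ)) - P (-(n : ℝ) - 1)) := by
      intro n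
      rw [MeasureTheory.setLIntegral_congr
        (MeasureTheory.Ioo_ae_eq_Ico (a := -(n:ℝ) - 1) (b := -(n:ℝ)) (μ := volume)).symm]
      exact key _ _ (by linarith)
    simp only [heach]
    rw [ENNReal.tsum_eq_iSup_nat]
    congr 1
    funext n
    rw [← ENNReal.ofReal_sum_of_nonneg]
    · congr 1
      have harg : ∀ i : ℕ, P (-(i : ℝ)) - P (-(i : ℝ) - 1) =
          (fun i : ℕ => P (-(i : ℝ))) i - (fun i : ℕ => P (-(i : ℝ))) (i + 1) := by
        intro i
        have : -((i : ℝ)) - 1 = -(((i + 1 : ℕ) : ℝ)) := by push_cast; ring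
        simp only [this]
      rw [Finset.sum_congr rfl fun i _ => harg i,
        Finset.sum_range_sub' fun i : ℕ => P (-(i : ℝ))]
      norm_num
    · intro i _
      have := hPmono (show -(i : ℝ) - 1 ≤ -(i : ℝ) by linarith)
      linarith
  -- S1E = ⊤ gives unboundedness of P below
  have hUnb : S1E r q = ⊤ → ∀ C : ℝ, ∃ n : ℕ, C ≤ P 0 - P (-(n : ℝ)) := by
    intro htop C
    by_contra hcon
    push_neg at hcon
    have hle : S1E r q ≤ ENNReal.ofReal C := by
      rw [hS1]
      exact iSup_le fun n => ENNReal.ofReal_le_ofReal (hcon n).le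
    rw [htop] at hle
    exact absurd (top_le_iff.mp hle) ENNReal.ofReal_ne_top
  -- unboundedness of P below gives S1E = ⊤
  have hTop : (∀ C : ℝ, ∃ n : ℕ, C ≤ P 0 - P (-(n : ℝ))) → S1E r q = ⊤ := by
    intro h
    rw [hS1]
    by_contra hne
    obtain ⟨n, hn⟩ := h ((⨆ n : ℕ, ENNReal.ofReal (P 0 - P (-(n : ℝ)))).toReal + 1)
    have h1 : ENNReal.ofReal ((⨆ n : ℕ, ENNReal.ofReal (P 0 - P (-(n : ℝ)))).toReal + 1) ≤
        ⨆ n : ℕ, ENNReal.ofReal (P 0 - P (-(n : ℝ))) :=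
      le_trans (ENNReal.ofReal_le_ofReal hn)
        (le_iSup (fun n : ℕ => ENNReal.ofReal (P 0 - P (-(n : ℝ)))) n)
    have h2 : (⨆ n : ℕ, ENNReal.ofReal (P 0 - P (-(n : ℝ)))) <
        ENNReal.ofReal ((⨆ n : ℕ, ENNReal.ofReal (P 0 - P (-(n : ℝ)))).toReal + 1) := by
      rw [ENNReal.lt_ofReal_iff_toReal_lt hne]
      linarith
    exact absurd h1 h2.not_ge
  -- chaining lemma
  have hchain : ∀ c a : ℝ, (∀ x : ℝ, c ≤ P (x + a) - P (x - a)) →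
      ∀ (y : ℝ) (k : ℕ), (k : ℝ) * c ≤ P (y + 2 * k * a) - P y := by
    intro c a hc y k
    induction k with
    | zero => simp
    | succ k ih =>
      have h1 := hc (y + 2 * (k : ℝ) * a + a)
      have harg1 : y + 2 * (k : ℝ) * a + a + a = y + 2 * ((k : ℝ) + 1) * a := by ring
      have harg2 : y + 2 * (k : ℝ) * a + a - a = y + 2 * (k : ℝ) * a := by ring
      rw [harg1, harg2] at h1
      push_cast
      push_cast at ih
      linarith
  constructor
  · -- forward direction
    rintro ⟨htop, M, hM⟩
    have hMx : ∀ x, dfun r q x ≤ M := fun x => hM (Set.mem_range_self x)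
    obtain ⟨n2, hn2⟩ := hUnb htop 2
    -- the defining set of dfun is nonempty
    have hSne : ∀ x : ℝ,
        {d : ℝ | 0 < d ∧ (∫ t in (x - d)..(x + d), q t / r t) = 2}.Nonempty := by
      intro x
      set D : ℝ := max (x + (n2 : ℝ)) (-x) + 1 with hD
      have hD1 : x + (n2 : ℝ) ≤ D - 1 := by
        rw [hD]; simp [le_max_left]
      have hD2 : -x ≤ D - 1 := by
        rw [hD]; simp [le_max_right]
      have hD0 : (0 : ℝ) ≤ D := by
        have := Nat.cast_nonneg (α := ℝ) n2
        nlinarith [le_max_right (x + (n2 : ℝ)) (-x), le_max_left (x + (n2 : ℝ)) (-x)]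
      have hcont : ContinuousOn (fun d => P (x + d) - P (x - d)) (Set.Icc 0 D) :=
        ((hPcont.comp (continuous_const.add continuous_id)).sub
          (hPcont.comp (continuous_const.sub continuous_id))).continuousOn
      have hfD : 2 ≤ P (x + D) - P (x - D) := by
        have h1 : P 0 ≤ P (x + D) := hPmono (by linarith)
        have h2 : P (x - D) ≤ P (-(n2 : ℝ)) := hPmono (by linarith)
        linarith
      have hmem : (2 : ℝ) ∈ Set.Icc ((fun d => P (x + d) - P (x - d)) 0)
          ((fun d => P (x + d) - P (x - d)) D) := by
        constructor
        · simp
        · exact hfD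
      obtain ⟨d, hdIcc, hfd⟩ := intermediate_value_Icc hD0 hcont hmem
      have hdpos : 0 < d := by
        rcases hdIcc.1.lt_or_eq with h | h
        · exact h
        · exfalso; rw [← h] at hfd; simp at hfd
      refine ⟨d, hdpos, ?_⟩
      rw [← hPsub]
      exact hfd
    have hbddS : ∀ x : ℝ, BddBelow
        {d : ℝ | 0 < d ∧ (∫ t in (x - d)..(x + d), q t / r t) = 2} :=
      fun x => ⟨0, fun d hd => hd.1.le⟩
    -- the integral at d = dfun x equals 2
    have hdf2 : ∀ x : ℝ, (∫ t in (x - dfun r q x)..(x + dfun r q x), q t / r t) = 2 := by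
      intro x
      have hcl : dfun r q x ∈
          closure {d : ℝ | 0 < d ∧ (∫ t in (x - d)..(x + d), q t / r t) = 2} :=
        csInf_mem_closure (hSne x) (hbddS x)
      have hclosed : IsClosed {d : ℝ | (∫ t in (x - d)..(x + d), q t / r t) = 2} := by
        have heq : (fun d : ℝ => ∫ t in (x - d)..(x + d), q t / r t) =
            fun d => P (x + d) - P (x - d) := funext fun d => (hPsub _ _).symm
        have : Continuous fun d : ℝ => ∫ t in (x - d)..(x + d), q t / r t := by
          rw [heq]
          exact (hPcont.comp (continuous_const.add continuous_id)).sub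
            (hPcont.comp (continuous_const.sub continuous_id))
        exact isClosed_eq this continuous_const
      exact closure_minimal (fun d hd => hd.2) hclosed hcl
    have hdfnn : ∀ x : ℝ, 0 ≤ dfun r q x :=
      fun x => le_csInf (hSne x) fun d hd => hd.1.le
    refine ⟨M + 1, ?_, ?_⟩
    · have := hdfnn 0
      have := hMx 0
      linarith
    · have h2le : ∀ x : ℝ, (2 : ℝ) ≤ ∫ t in (x - (M + 1))..(x + (M + 1)), q t / r t := by
        intro x
        rw [← hPsub]
        have h2 := hdf2 x
        rw [← hPsub] at h2
        have hle : dfun r q x ≤ M + 1 := le_trans (hMx x) (by linarith)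
        have m1 : P (x + dfun r q x) ≤ P (x + (M + 1)) := hPmono (by linarith)
        have m2 : P (x - (M + 1)) ≤ P (x - dfun r q x) := hPmono (by linarith)
        linarith
      exact lt_of_lt_of_le two_pos (le_ciInf h2le)
  · -- reverse direction
    rintro ⟨a, ha, hinf⟩
    have hbdd0 : BddBelow (Set.range fun x : ℝ => ∫ t in (x - a)..(x + a), q t / r t) := by
      refine ⟨0, ?_⟩
      rintro _ ⟨x, rfl⟩
      exact intervalIntegral.integral_nonneg (by linarith) fun t _ => hgnn t
    have hcx : ∀ x : ℝ, (⨅ x : ℝ, ∫ t in (x - a)..(x + a), q t / r t) ≤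
        ∫ t in (x - a)..(x + a), q t / r t := fun x => ciInf_le hbdd0 x
    set c : ℝ := ⨅ x : ℝ, ∫ t in (x - a)..(x + a), q t / r t with hc
    have hcx' : ∀ x : ℝ, c ≤ P (x + a) - P (x - a) := by
      intro x
      rw [hPsub]
      exact hcx x
    have hch := hchain c a hcx'
    constructor
    · apply hTop
      intro C
      obtain ⟨N, hN⟩ := exists_nat_ge (C / c)
      have hCN : C ≤ (N : ℝ) * c := by
        rw [div_le_iff₀ hinf] at hN
        linarith
      obtain ⟨n, hn⟩ := exists_nat_ge (2 * (N : ℝ) * a)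
      refine ⟨n, ?_⟩
      have h1 := hch (-(2 * (N : ℝ) * a)) N
      have harg : -(2 * (N : ℝ) * a) + 2 * (N : ℝ) * a = 0 := by ring
      rw [harg] at h1
      have h2 : P (-(n : ℝ)) ≤ P (-(2 * (N : ℝ) * a)) := hPmono (by linarith)
      linarith
    · -- BddAbove of range dfun
      obtain ⟨N, hN⟩ := exists_nat_ge (2 / c)
      have h2N : (2 : ℝ) ≤ (N : ℝ) * c := by
        rw [div_le_iff₀ hinf] at hN
        linarith
      have hNpos : (0 : ℝ) < N := by
        by_contra h
        push_neg at h
        nlinarith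
      have hNa : (0 : ℝ) < (N : ℝ) * a := mul_pos hNpos ha
      refine ⟨(N : ℝ) * a, ?_⟩
      rintro _ ⟨x, rfl⟩
      have hF : (2 : ℝ) ≤ P (x + (N : ℝ) * a) - P (x - (N : ℝ) * a) := by
        have h1 := hch (x - (N : ℝ) * a) N
        have harg : x - (N : ℝ) * a + 2 * (N : ℝ) * a = x + (N : ℝ) * a := by ring
        rw [harg] at h1
        linarith
      have hcont : ContinuousOn (fun d => P (x + d) - P (x - d)) (Set.Icc 0 ((N : ℝ) * a)) :=
        ((hPcont.comp (continuous_const.add continuous_id)).sub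
          (hPcont.comp (continuous_const.sub continuous_id))).continuousOn
      have hmem : (2 : ℝ) ∈ Set.Icc ((fun d => P (x + d) - P (x - d)) 0)
          ((fun d => P (x + d) - P (x - d)) ((N : ℝ) * a)) := by
        constructor
        · simp
        · exact hF
      obtain ⟨d, hdIcc, hfd⟩ := intermediate_value_Icc hNa.le hcont hmem
      have hdpos : 0 < d := by
        rcases hdIcc.1.lt_or_eq with h | h
        · exact h
        · exfalso; rw [← h] at hfd; simp at hfd
      have hdmem : d ∈ {d : ℝ | 0 < d ∧ (∫ t in (x - d)..(x + d), q t / r t) = 2} := by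
        refine ⟨hdpos, ?_⟩
        rw [← hPsub]
        exact hfd
      exact le_trans (csInf_le ⟨0, fun e he => he.1.le⟩ hdmem) hdIcc.2
end
end

section
/- Suppose the boundary value problem −r(x)y′(x)+q(x)y(x)=f(x), lim_{|x|→∞} y(x)=0, is correctly solvable in L₁(ℝ), and set r₀ = inf_{x∈ℝ} r(x). Then for every f ∈ L₁(ℝ) the solution y satisfies ‖y′‖_{L₁} + ‖(q/r)·y‖_{L₁} ≤ (3/r₀)‖f‖_{L₁}. -/
/-!
With `h = q / r` and `k = f / r` the equation reads `y' = h y - k`. The function `|y|` is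
absolutely continuous with `|y|' = sign y · y'` a.e., so integrating over `[a, b]` gives
`∫ h |y| ≤ |y b| - |y a| + ∫ |k|`; letting `a → -∞`, `b → ∞` yields `‖h y‖₁ ≤ ‖k‖₁`, hence
`‖y'‖₁ + ‖h y‖₁ ≤ 3 ‖k‖₁ ≤ (3 / r₀) ‖f‖₁`.

That `r₀ > 0` comes from correct solvability: if `inf r = 0`, choose intervals
`[tₙ, tₙ + δₙ]` with `|tₙ| > n` on which `r < 2⁻ⁿ` and `∫ |h| < 1`. The right-hand side
`F = ∑ (2⁻ⁿ / δₙ) 𝟙[tₙ, tₙ + δₙ]` is integrable, and integrating the equation over each of these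
intervals forces `max |y| > 1/3` there, contradicting `y → 0` at `±∞`.
-/

open MeasureTheory Filter Set Real
open scoped ENNReal NNReal

noncomputable section

/-- Correct solvability of the problem `-r·y' + q·y = f`, `y(±∞) = 0`, in `L_p(ℝ)`:
for every `f ∈ L_p(ℝ)` there is a unique solution `y ∈ L_p(ℝ)`, and the solution
satisfies `‖y‖_p ≤ c‖f‖_p` with a constant `c ∈ (0,∞)` independent of `f`. -/
def CorrectlySolvableLp (r q : ℝ → ℝ) (p : ℝ≥0∞) : Prop :=
  ∃ c : ℝ≥0∞, 0 < c ∧ c < ⊤ ∧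
    ∀ f : ℝ → ℝ, MemLp f p volume →
      (∃! y : ℝ → ℝ, IsSolution r q f y ∧ MemLp y p volume) ∧
      ∀ y : ℝ → ℝ, IsSolution r q f y → MemLp y p volume →
        eLpNorm y p volume ≤ c * eLpNorm f p volume

open scoped Topology

theorem MeasureTheory.LocallyIntegrable.intervalIntegrable {E : Type*} [NormedAddCommGroup E]
    {f : ℝ → E} (hf : LocallyIntegrable f volume) (a b : ℝ) : IntervalIntegrable f volume a b :=
  (hf.integrableOn_isCompact isCompact_uIcc).intervalIntegrable

theorem MeasureTheory.LocallyIntegrable.div_continuous {X : Type*} [TopologicalSpace X]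
    [MeasurableSpace X] [OpensMeasurableSpace X] [LocallyCompactSpace X] [T2Space X]
    [SecondCountableTopologyEither X ℝ] {μ : Measure X} {f g : X → ℝ}
    (hf : LocallyIntegrable f μ) (hg : Continuous g) (hg₀ : ∀ x, g x ≠ 0) :
    LocallyIntegrable (fun x => f x / g x) μ := by
  simpa only [div_eq_mul_inv, Pi.inv_apply] using hf.mul_continuous (hg.inv₀ hg₀)

theorem ofReal_intervalIntegral_abs_le_lintegral {k : ℝ → ℝ} (hk : LocallyIntegrable k volume)
    {a b : ℝ} (hab : a ≤ b) : ENNReal.ofReal (∫ x in a..b, |k x|) ≤ ∫⁻ x, ‖k x‖ₑ := by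
  rw [intervalIntegral.integral_of_le hab]
  simp_rw [← Real.norm_eq_abs]
  rw [ofReal_integral_norm_eq_lintegral_enorm (hk.intervalIntegrable a b).1]
  exact setLIntegral_le_lintegral _ _

theorem MeasureTheory.eLpNorm_div_le_of_forall_le {α : Type*} [MeasurableSpace α]
    {μ : Measure α} {f r : α → ℝ} {c : ℝ} (hc : 0 < c) (hr : ∀ x, c ≤ r x) (p : ℝ≥0∞) :
    eLpNorm (fun x => f x / r x) p μ ≤ ENNReal.ofReal c⁻¹ * eLpNorm f p μ := by
  refine eLpNorm_le_mul_eLpNorm_of_ae_le_mul (ae_of_all _ fun x => ?_) p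
  rw [norm_div, Real.norm_of_nonneg (hc.trans_le (hr x)).le, div_eq_inv_mul]
  gcongr
  exact hr x

theorem LipschitzWith.comp_absolutelyContinuousOnInterval {X Y : Type*} [PseudoMetricSpace X]
    [PseudoMetricSpace Y] {g : X → Y} {K : ℝ≥0} (hg : LipschitzWith K g) {f : ℝ → X} {a b : ℝ}
    (hf : AbsolutelyContinuousOnInterval f a b) : AbsolutelyContinuousOnInterval (g ∘ f) a b := by
  unfold AbsolutelyContinuousOnInterval at hf ⊢
  have hK := hf.const_mul (K : ℝ)
  rw [mul_zero] at hK
  refine squeeze_zero (fun _ => Finset.sum_nonneg fun _ _ => dist_nonneg) (fun E => ?_) hK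
  rw [Finset.mul_sum]
  exact Finset.sum_le_sum fun i _ => hg.dist_le_mul _ _

theorem deriv_abs_comp_of_hasDerivAt {y : ℝ → ℝ} {y' x : ℝ} (hy : HasDerivAt y y' x) :
    deriv (fun t => |y t|) x = SignType.sign (y x) * y' := by
  obtain hx | hx := eq_or_ne (y x) 0
  · -- `|y|` need not be differentiable here, but `deriv` of a local minimum is `0` regardless.
    have hmin : IsLocalMin (fun t => |y t|) x :=
      Eventually.of_forall fun t => by simp [hx]
    simp [hmin.deriv_eq_zero, hx]
  · exact ((hasDerivAt_abs hx).comp x hy).deriv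

section Primitive

variable {g y : ℝ → ℝ}

theorem absolutelyContinuousOnInterval_of_sub_eq_integral (hg : LocallyIntegrable g volume)
    (hy : ∀ a b, y b - y a = ∫ t in a..b, g t) (a b : ℝ) :
    AbsolutelyContinuousOnInterval y a b := by
  have hprim : y = (fun _ => y a) + fun x => ∫ t in a..x, g t := by
    ext x; simp [← hy a x]
  rw [hprim]
  exact (LipschitzWith.const (y a)).lipschitzOnWith.absolutelyContinuousOnInterval.add
    ((hg.intervalIntegrable a b).absolutelyContinuousOnInterval_intervalIntegral left_mem_uIcc)

theorem ae_deriv_abs_eq_sign_mul_of_sub_eq_integral (hg : LocallyIntegrable g volume)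
    (hy : ∀ a b, y b - y a = ∫ t in a..b, g t) :
    ∀ᵐ x, deriv (fun t => |y t|) x = SignType.sign (y x) * g x := by
  filter_upwards [LocallyIntegrable.ae_hasDerivAt_integral hg] with x hx
  have hprim : y = fun x => y 0 + ∫ t in (0 : ℝ)..x, g t := by
    ext x; simp [← hy 0 x]
  rw [hprim]
  exact deriv_abs_comp_of_hasDerivAt ((hx 0).const_add _)

end Primitive

section LinearEquation

variable {h k y : ℝ → ℝ}

theorem integral_mul_abs_le_of_sub_eq_integral (hh : LocallyIntegrable h volume)
    (hk : LocallyIntegrable k volume) (hyc : Continuous y)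
    (hy : ∀ a b, y b - y a = ∫ t in a..b, h t * y t - k t) {a b : ℝ} (hab : a ≤ b) :
    ∫ x in a..b, h x * |y x| ≤ |y b| - |y a| + ∫ x in a..b, |k x| := by
  have hg : LocallyIntegrable (fun t => h t * y t - k t) volume :=
    (hh.mul_continuous hyc).sub hk
  have hac : AbsolutelyContinuousOnInterval (fun t => |y t|) a b :=
    (lipschitzWith_one_norm (E := ℝ)).comp_absolutelyContinuousOnInterval
      (absolutelyContinuousOnInterval_of_sub_eq_integral hg hy a b)
  calc ∫ x in a..b, h x * |y x|
      ≤ ∫ x in a..b, deriv (fun t => |y t|) x + |k x| := by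
        refine intervalIntegral.integral_mono_ae hab
          ((hh.mul_continuous hyc.abs).intervalIntegrable a b)
          (hac.intervalIntegrable_deriv.add (hk.intervalIntegrable a b).abs) ?_
        filter_upwards [ae_deriv_abs_eq_sign_mul_of_sub_eq_integral hg hy] with x hx
        rw [hx, mul_sub, ← mul_assoc, mul_comm _ (h x), mul_assoc, sign_mul_self]
        have : (SignType.sign (y x) : ℝ) * k x ≤ |k x| := by
          cases SignType.sign (y x) <;> simp [le_abs_self, neg_le_abs]
        linarith
    _ = |y b| - |y a| + ∫ x in a..b, |k x| := by
        rw [intervalIntegral.integral_add hac.intervalIntegrable_deriv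
          (hk.intervalIntegrable a b).abs, hac.integral_deriv_eq_sub]

theorem eLpNorm_mul_le_of_sub_eq_integral (hh : LocallyIntegrable h volume) (hh₀ : ∀ x, 0 ≤ h x)
    (hk : LocallyIntegrable k volume) (hyc : Continuous y)
    (hy : ∀ a b, y b - y a = ∫ t in a..b, h t * y t - k t) (htop : Tendsto y atTop (𝓝 0)) :
    eLpNorm (fun x => h x * y x) 1 volume ≤ eLpNorm k 1 volume := by
  rw [eLpNorm_one_eq_lintegral_enorm, eLpNorm_one_eq_lintegral_enorm]
  have hlim := (aecover_Icc (μ := volume) tendsto_neg_atTop_atBot tendsto_id)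
    |>.lintegral_tendsto_of_countably_generated (hh.mul_continuous hyc).aestronglyMeasurable.enorm
  have hbound : Tendsto (fun b => ENNReal.ofReal |y b| + ∫⁻ x, ‖k x‖ₑ) atTop
      (𝓝 (∫⁻ x, ‖k x‖ₑ)) := by
    have habs : Tendsto (fun b => |y b|) atTop (𝓝 0) := by simpa using htop.abs
    simpa using ((ENNReal.continuous_ofReal.tendsto 0).comp habs).add_const (∫⁻ x, ‖k x‖ₑ)
  refine le_of_tendsto_of_tendsto hlim hbound ((eventually_ge_atTop 0).mono fun b hb => ?_)
  have hnb : -b ≤ b := by linarith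
  have hint := integral_mul_abs_le_of_sub_eq_integral hh hk hyc hy hnb
  calc ∫⁻ x in Icc (-b) b, ‖h x * y x‖ₑ
      = ENNReal.ofReal (∫ x in (-b)..b, h x * |y x|) := by
        rw [intervalIntegral.integral_of_le hnb, ← integral_Icc_eq_integral_Ioc,
          ofReal_integral_eq_lintegral_ofReal
            ((hh.mul_continuous hyc.abs).integrableOn_isCompact isCompact_Icc)
            (ae_of_all _ fun x => mul_nonneg (hh₀ x) (abs_nonneg _))]
        congr 1 with x
        rw [Real.enorm_eq_ofReal_abs, abs_mul, abs_of_nonneg (hh₀ x)]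
    _ ≤ ENNReal.ofReal (|y b| + ∫ x in (-b)..b, |k x|) :=
        ENNReal.ofReal_le_ofReal (by linarith [abs_nonneg (y (-b))])
    _ ≤ ENNReal.ofReal |y b| + ENNReal.ofReal (∫ x in (-b)..b, |k x|) := ENNReal.ofReal_add_le
    _ ≤ ENNReal.ofReal |y b| + ∫⁻ x, ‖k x‖ₑ := by
        gcongr
        exact ofReal_intervalIntegral_abs_le_lintegral hk hnb

theorem integral_le_mul_of_forall_abs_le (hh : LocallyIntegrable h volume)
    (hk : LocallyIntegrable k volume) (hyc : Continuous y)
    (hy : ∀ a b, y b - y a = ∫ t in a..b, h t * y t - k t) {a b M : ℝ} (hab : a ≤ b)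
    (hM : ∀ x ∈ Icc a b, |y x| ≤ M) :
    ∫ x in a..b, k x ≤ M * (2 + ∫ x in a..b, |h x|) := by
  have hhy := (hh.mul_continuous hyc).intervalIntegrable a b
  have hsplit : ∫ x in a..b, k x = (∫ x in a..b, h x * y x) - (y b - y a) := by
    rw [hy, intervalIntegral.integral_sub hhy (hk.intervalIntegrable a b)]
    ring
  have hmono : ∫ x in a..b, h x * y x ≤ ∫ x in a..b, M * |h x| := by
    refine intervalIntegral.integral_mono_on hab hhy
      (((hh.intervalIntegrable a b).abs).const_mul M) fun x hx => ?_
    calc h x * y x ≤ |h x| * |y x| := by rw [← abs_mul]; exact le_abs_self _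
      _ ≤ M * |h x| := by rw [mul_comm]; exact mul_le_mul_of_nonneg_right (hM x hx) (abs_nonneg _)
  rw [intervalIntegral.integral_const_mul] at hmono
  have ha := abs_le.mp (hM a ⟨le_rfl, hab⟩)
  have hb := abs_le.mp (hM b ⟨hab, le_rfl⟩)
  linarith

end LinearEquation

theorem MeasureTheory.exists_integrable_forall_ae_le_of_tsum_ne_top {α : Type*}
    [MeasurableSpace α] {μ : Measure α} {s : ℕ → Set α} (hs : ∀ n, MeasurableSet (s n))
    (c : ℕ → ℝ) (hc : ∑' n, ENNReal.ofReal (c n) * μ (s n) ≠ ∞) :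
    ∃ F : α → ℝ, Integrable F μ ∧ ∀ n, ∀ᵐ x ∂μ, x ∈ s n → c n ≤ F x := by
  -- Summing in `ℝ≥0∞` avoids any summability question; the sum is finite almost everywhere.
  set G : α → ℝ≥0∞ := fun x => ∑' n, (s n).indicator (fun _ => ENNReal.ofReal (c n)) x
  have hGm : Measurable G := Measurable.tsum fun n => measurable_const.indicator (hs n)
  have hG : ∫⁻ x, G x ∂μ ≠ ∞ := by
    rwa [lintegral_tsum fun n => (measurable_const.indicator (hs n)).aemeasurable,
      tsum_congr fun n => lintegral_indicator_const (hs n) _]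
  refine ⟨fun x => (G x).toReal, integrable_toReal_of_lintegral_ne_top hGm.aemeasurable hG,
    fun n => ?_⟩
  filter_upwards [ae_lt_top hGm hG] with x hxG hx
  calc c n ≤ (ENNReal.ofReal (c n)).toReal := by
        rw [ENNReal.toReal_ofReal']; exact le_max_left _ _
    _ = ((s n).indicator (fun _ => ENNReal.ofReal (c n)) x).toReal := by
        rw [indicator_of_mem hx]
    _ ≤ (G x).toReal := ENNReal.toReal_mono hxG.ne (ENNReal.le_tsum n)
theorem exists_abs_gt_lt_of_iInf_le_zero {r : ℝ → ℝ} (hr : Continuous r) (hrpos : ∀ x, 0 < r x)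
    (hinf : ⨅ x, r x ≤ 0) (R : ℝ) {ε : ℝ} (hε : 0 < ε) : ∃ t, R < |t| ∧ r t < ε := by
  obtain ⟨x₀, -, hx₀⟩ := (isCompact_Icc (a := -|R|) (b := |R|)).exists_isMinOn
    (nonempty_Icc.2 (neg_le_self (abs_nonneg R))) hr.continuousOn
  obtain ⟨t, ht⟩ := exists_lt_of_ciInf_lt (hinf.trans_lt (lt_min hε (hrpos x₀)))
  refine ⟨t, not_le.1 fun htR => ?_, ht.trans_le (min_le_left _ _)⟩
  exact (ht.trans_le (min_le_right _ _)).not_ge (hx₀ (abs_le.1 (htR.trans (le_abs_self R))))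

theorem exists_forall_Icc_lt_and_integral_abs_lt {r h : ℝ → ℝ} (hr : Continuous r)
    (hh : LocallyIntegrable h volume) {t ε : ℝ} (ht : r t < ε) :
    ∃ δ, 0 < δ ∧ δ ≤ 1 ∧ (∀ x ∈ Icc t (t + δ), r x < ε) ∧ ∫ x in t..t + δ, |h x| < 1 := by
  have hr' : ∀ᶠ δ in 𝓝[>] (0 : ℝ), ∀ x ∈ Icc t (t + δ), r x < ε := by
    obtain ⟨η, hη, hball⟩ :=
      Metric.eventually_nhds_iff.1 (hr.continuousAt.eventually_lt continuousAt_const ht)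
    filter_upwards [Ioo_mem_nhdsGT hη] with δ hδ x hx
    exact hball (by rw [Real.dist_eq, abs_lt]; constructor <;> linarith [hx.1, hx.2, hδ.2])
  have hh' : ∀ᶠ δ in 𝓝[>] (0 : ℝ), ∫ x in t..t + δ, |h x| < 1 := by
    have hcont : Continuous fun δ => ∫ x in t..t + δ, |h x| :=
      (intervalIntegral.continuous_primitive (fun a b => (hh.intervalIntegrable a b).abs) t).comp
        (continuous_const.add continuous_id)
    have hlim : Tendsto (fun δ => ∫ x in t..t + δ, |h x|) (𝓝 0) (𝓝 0) := by
      simpa using hcont.tendsto 0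
    exact nhdsWithin_le_nhds (hlim.eventually_lt_const zero_lt_one)
  have h01 : ∀ᶠ δ in 𝓝[>] (0 : ℝ), δ ∈ Ioo 0 1 := Ioo_mem_nhdsGT one_pos
  obtain ⟨δ, ⟨hδ₀, hδ₁⟩, hδr, hδh⟩ := (h01.and (hr'.and hh')).exists
  exact ⟨δ, hδ₀, hδ₁.le, hδr, hδh⟩

theorem exists_integrable_one_le_integral_div_on_far_intervals {r h : ℝ → ℝ} (hr : Continuous r)
    (hrpos : ∀ x, 0 < r x) (hh : LocallyIntegrable h volume) (hinf : ⨅ x, r x ≤ 0) :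
    ∃ F : ℝ → ℝ, Integrable F volume ∧ ∃ t δ : ℕ → ℝ, ∀ n : ℕ, (n : ℝ) < |t n| ∧ 0 < δ n ∧
      δ n ≤ 1 ∧ ∫ x in t n..t n + δ n, |h x| < 1 ∧ 1 ≤ ∫ x in t n..t n + δ n, F x / r x := by
  choose t ht_far ht_small using fun n : ℕ =>
    exists_abs_gt_lt_of_iInf_le_zero hr hrpos hinf n (by positivity : (0 : ℝ) < (1 / 2) ^ n)
  choose δ hδ₀ hδ₁ hδr hδh using fun n =>
    exists_forall_Icc_lt_and_integral_abs_lt hr hh (ht_small n)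
  have hsum : ∑' n, ENNReal.ofReal ((1 / 2) ^ n / δ n) * volume (Icc (t n) (t n + δ n)) ≠ ∞ := by
    have hterm : ∀ n, ENNReal.ofReal ((1 / 2) ^ n / δ n) * volume (Icc (t n) (t n + δ n)) =
        ENNReal.ofReal ((1 / 2) ^ n) := fun n => by
      rw [Real.volume_Icc, add_sub_cancel_left,
        ← ENNReal.ofReal_mul (div_nonneg (by positivity) (hδ₀ n).le),
        div_mul_cancel₀ _ (hδ₀ n).ne']
    rw [tsum_congr hterm, ← ENNReal.ofReal_tsum_of_nonneg (fun n => by positivity)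
      summable_geometric_two]
    exact ENNReal.ofReal_ne_top
  obtain ⟨F, hF, hFge⟩ :=
    exists_integrable_forall_ae_le_of_tsum_ne_top (fun n => measurableSet_Icc) _ hsum
  have hk := hF.locallyIntegrable.div_continuous hr fun x => (hrpos x).ne'
  refine ⟨F, hF, t, δ, fun n => ⟨ht_far n, hδ₀ n, hδ₁ n, hδh n, ?_⟩⟩
  have hδ : t n ≤ t n + δ n := le_add_of_nonneg_right (hδ₀ n).le
  calc (1 : ℝ) = ∫ _ in t n..t n + δ n, 1 / δ n := by
        rw [intervalIntegral.integral_const, smul_eq_mul, add_sub_cancel_left,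
          mul_one_div_cancel (hδ₀ n).ne']
    _ ≤ ∫ x in t n..t n + δ n, F x / r x := by
        refine intervalIntegral.integral_mono_ae_restrict hδ intervalIntegrable_const
          (hk.intervalIntegrable _ _) ?_
        filter_upwards [(ae_restrict_iff' measurableSet_Icc).2 (hFge n),
          ae_restrict_mem measurableSet_Icc] with x hFx hx
        rw [le_div_iff₀ (hrpos x)]
        calc 1 / δ n * r x ≤ 1 / δ n * (1 / 2) ^ n :=
              mul_le_mul_of_nonneg_left (hδr n x hx).le (one_div_nonneg.2 (hδ₀ n).le)
          _ = (1 / 2) ^ n / δ n := by ring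
          _ ≤ F x := hFx

theorem IsSolution.sub_eq_integral {r q f y : ℝ → ℝ} (hy : IsSolution r q f y) (a b : ℝ) :
    y b - y a = ∫ t in a..b, q t / r t * y t - f t / r t := by
  rw [hy.2.1]
  congr 1 with t
  ring

theorem CorrectlySolvableLp.iInf_pos {r q : ℝ → ℝ} (hr : Continuous r) (hrpos : ∀ x, 0 < r x)
    (hq : LocallyIntegrable q volume) (hcs : CorrectlySolvableLp r q 1) : 0 < ⨅ x, r x := by
  refine lt_of_not_ge fun hinf => ?_
  have hrne : ∀ x, r x ≠ 0 := fun x => (hrpos x).ne'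
  have hh := hq.div_continuous hr hrne
  obtain ⟨F, hF, t, δ, hbump⟩ :=
    exists_integrable_one_le_integral_div_on_far_intervals hr hrpos hh hinf
  obtain ⟨_, -, -, hC⟩ := hcs
  obtain ⟨⟨y, ⟨hsol, -⟩, -⟩, -⟩ := hC F (memLp_one_iff_integrable.2 hF)
  obtain ⟨X, hX⟩ : ∃ X, ∀ x, X ≤ |x| → |y x| ≤ 1 / 4 := by
    have hy : Tendsto y (comap abs atTop) (𝓝 0) := by
      rw [comap_abs_atTop]; exact hsol.2.2.1.sup hsol.2.2.2
    simpa [Real.dist_eq] using (atTop_basis.comap _).eventually_iff.1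
      (hy.eventually (Metric.closedBall_mem_nhds 0 (by norm_num : (0 : ℝ) < 1 / 4)))
  obtain ⟨n, hn⟩ := exists_nat_gt (X + 1)
  obtain ⟨ht_far, hδ₀, hδ₁, hδh, hlower⟩ := hbump n
  have hupper := integral_le_mul_of_forall_abs_le hh
    (hF.locallyIntegrable.div_continuous hr hrne) hsol.1 hsol.sub_eq_integral
    (le_add_of_nonneg_right hδ₀.le) fun x hx => hX x <| by
      have := abs_sub_abs_le_abs_sub (t n) x
      have := abs_le.2 (⟨by linarith [hx.2], by linarith [hx.1]⟩ : -1 ≤ t n - x ∧ t n - x ≤ 1)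
      linarith
  linarith

theorem stmt9 (r q : ℝ → ℝ) (hr : Continuous r) (hrpos : ∀ x, 0 < r x)
    (hq : LocallyIntegrable q volume) (hqnn : ∀ x, 0 ≤ q x)
    (hcs : CorrectlySolvableLp r q 1) :
    ∀ f : ℝ → ℝ, MemLp f 1 volume →
      ∀ y : ℝ → ℝ, IsSolution r q f y → MemLp y 1 volume →
        eLpNorm (fun x => (q x * y x - f x) / r x) 1 volume +
            eLpNorm (fun x => (q x / r x) * y x) 1 volume ≤
          ENNReal.ofReal (3 / ⨅ x, r x) * eLpNorm f 1 volume := by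
  intro f hf y hsol _
  set r₀ := ⨅ x, r x
  have hr₀ : 0 < r₀ := hcs.iInf_pos hr hrpos hq
  have hrne : ∀ x, r x ≠ 0 := fun x => (hrpos x).ne'
  have hh := hq.div_continuous hr hrne
  have hk := (memLp_one_iff_integrable.1 hf).locallyIntegrable.div_continuous hr hrne
  have hmul : eLpNorm (fun x => q x / r x * y x) 1 volume ≤ eLpNorm (fun x => f x / r x) 1 volume :=
    eLpNorm_mul_le_of_sub_eq_integral hh (fun x => div_nonneg (hqnn x) (hrpos x).le) hk hsol.1
      hsol.sub_eq_integral hsol.2.2.2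
  have hsub : eLpNorm (fun x => (q x * y x - f x) / r x) 1 volume ≤
      eLpNorm (fun x => q x / r x * y x) 1 volume + eLpNorm (fun x => f x / r x) 1 volume := by
    simp_rw [sub_div, mul_div_right_comm]
    exact eLpNorm_sub_le (hh.mul_continuous hsol.1).aestronglyMeasurable hk.aestronglyMeasurable
      le_rfl
  have hdiv : eLpNorm (fun x => f x / r x) 1 volume ≤ ENNReal.ofReal r₀⁻¹ * eLpNorm f 1 volume :=
    eLpNorm_div_le_of_forall_le hr₀
      (fun x => ciInf_le ⟨0, forall_mem_range.2 fun x => (hrpos x).le⟩ x) 1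
  calc _ ≤ (eLpNorm (fun x => f x / r x) 1 volume + eLpNorm (fun x => f x / r x) 1 volume) +
        eLpNorm (fun x => f x / r x) 1 volume := by grw [hsub, hmul]
    _ = 3 * eLpNorm (fun x => f x / r x) 1 volume := by ring
    _ ≤ 3 * (ENNReal.ofReal r₀⁻¹ * eLpNorm f 1 volume) := by gcongr
    _ = ENNReal.ofReal (3 / r₀) * eLpNorm f 1 volume := by
        rw [← mul_assoc, div_eq_mul_inv, ENNReal.ofReal_mul zero_le_three, ENNReal.ofReal_ofNat]
end
end

section
/- Assume S₁ = ∞, and suppose q = q₁ + q₂ where q₁ is continuous and positive on ℝ and q₂ is locally integrable, and that κ₁(x) → 0 and κ₂(x) → 0 as |x| → ∞, where κ₁(x) = sup_{|z| ≤ 2r(x)/q₁(x)} |∫₀^z [ q₁(x+t)/r(x+t) − 2q₁(x)/r(x) + q₁(x−t)/r(x−t) ] dt| and κ₂(x) = sup_{|z| ≤ 2r(x)/q₁(x)} |∫_{x−z}^{x+z} q₂(t)/r(t) dt|. Then: (a) there exist a constant c₁ > 0 and x₀ > 0 such that for all |x| ≥ x₀, (q₁(x)/r(x))·d(x) = 1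 + ε(x) with |ε(x)| ≤ c₁(κ₁(x)+κ₂(x)); (b) there exists c₂ ≥ 1 such that c₂^{−1} ≤ (q₁(x)/r(x))·d(x) ≤ c₂ for all x ∈ ℝ. -/
open MeasureTheory Filter Set Real
open scoped ENNReal NNReal

noncomputable section

/-- Abstract characterization of the first positive root of a continuous function. -/
lemma sInf_root_spec {G : ℝ → ℝ} (hGc : Continuous G) (hG0 : G 0 = 0)
    {D : ℝ} (hD : 0 ≤ D) (h2 : 2 ≤ G D) :
    0 < sInf {d : ℝ | 0 < d ∧ G d = 2} ∧ sInf {d : ℝ | 0 < d ∧ G d = 2} ≤ D ∧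
      G (sInf {d : ℝ | 0 < d ∧ G d = 2}) = 2 := by
  set S : Set ℝ := {d : ℝ | 0 < d ∧ G d = 2} with hS
  have hmem2 : (2 : ℝ) ∈ Icc (G 0) (G D) := by rw [hG0]; exact ⟨by norm_num, h2⟩
  obtain ⟨d₀, hd₀m, hGd₀⟩ := intermediate_value_Icc hD hGc.continuousOn hmem2
  have hd₀pos : 0 < d₀ := by
    rcases lt_or_eq_of_le hd₀m.1 with h | h
    · exact h
    · exfalso; rw [← h, hG0] at hGd₀; norm_num at hGd₀
  have hne : S.Nonempty := ⟨d₀, hd₀pos, hGd₀⟩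
  have hbdd : BddBelow S := ⟨0, fun d hd => hd.1.le⟩
  have hle : sInf S ≤ D := le_trans (csInf_le hbdd ⟨hd₀pos, hGd₀⟩) hd₀m.2
  have hGs : G (sInf S) = 2 := by
    have hsub : S ⊆ {d | G d = 2} := fun d hd => hd.2
    have hcl : IsClosed {d | G d = 2} := isClosed_eq hGc continuous_const
    have h1 : sInf S ∈ closure S := csInf_mem_closure hne hbdd
    have h2' : sInf S ∈ closure {d | G d = 2} := closure_mono hsub h1
    rwa [hcl.closure_eq] at h2'
  have h0 : 0 ≤ sInf S := le_csInf hne fun d hd => hd.1.le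
  have hpos : 0 < sInf S := by
    rcases lt_or_eq_of_le h0 with h | h
    · exact h
    · exfalso; rw [← h, hG0] at hGs; norm_num at hGs
  exact ⟨hpos, hle, hGs⟩

theorem stmt16 (r q : ℝ → ℝ) (hr : Continuous r) (hrpos : ∀ x, 0 < r x)
    (hq : LocallyIntegrable q volume) (hqnn : ∀ x, 0 ≤ q x)
    (hS1 : S1E r q = ⊤)
    (q₁ q₂ : ℝ → ℝ) (hq₁c : Continuous q₁) (hq₁pos : ∀ x, 0 < q₁ x)
    (hq₂ : LocallyIntegrable q₂ volume) (hq12 : ∀ x, q x = q₁ x + q₂ x)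
    (κ₁ κ₂ : ℝ → ℝ)
    (hκ₁def : ∀ x, κ₁ x = ⨆ z : {z : ℝ // |z| ≤ 2 * r x / q₁ x},
      |∫ t in (0 : ℝ)..(z : ℝ),
        (q₁ (x + t) / r (x + t) - 2 * (q₁ x / r x) + q₁ (x - t) / r (x - t))|)
    (hκ₂def : ∀ x, κ₂ x = ⨆ z : {z : ℝ // |z| ≤ 2 * r x / q₁ x},
      |∫ t in (x - (z : ℝ))..(x + (z : ℝ)), q₂ t / r t|)
    (hκ₁top : Tendsto κ₁ atTop (nhds 0)) (hκ₁bot : Tendsto κ₁ atBot (nhds 0))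
    (hκ₂top : Tendsto κ₂ atTop (nhds 0)) (hκ₂bot : Tendsto κ₂ atBot (nhds 0)) :
    (∃ c₁ : ℝ, 0 < c₁ ∧ ∃ x₀ : ℝ, 0 < x₀ ∧ ∀ x : ℝ, x₀ ≤ |x| →
      |q₁ x / r x * dfun r q x - 1| ≤ c₁ * (κ₁ x + κ₂ x)) ∧
    (∃ c₂ : ℝ, 1 ≤ c₂ ∧ ∀ x : ℝ,
      c₂⁻¹ ≤ q₁ x / r x * dfun r q x ∧ q₁ x / r x * dfun r q x ≤ c₂) := by
  have hrne : ∀ t, r t ≠ 0 := fun t => (hrpos t).ne'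
  have hq₁ne : ∀ t, q₁ t ≠ 0 := fun t => (hq₁pos t).ne'
  -- local integrability of g := q/r and g₂ := q₂/r
  have hgloc : LocallyIntegrable (fun t => q t / r t) volume := by
    have : (fun t => q t / r t) = fun t => q t * (r t)⁻¹ := by funext t; rw [div_eq_mul_inv]
    rw [this]
    exact locallyIntegrable_iff.mpr fun k hk =>
      (hq.integrableOn_isCompact hk).mul_continuousOn ((hr.inv₀ hrne).continuousOn) hk
  have hg₂loc : LocallyIntegrable (fun t => q₂ t / r t) volume := by
    have : (fun t => q₂ t / r t) = fun t => q₂ t * (r t)⁻¹ := by funext t; rw [div_eq_mul_inv]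
    rw [this]
    exact locallyIntegrable_iff.mpr fun k hk =>
      (hq₂.integrableOn_isCompact hk).mul_continuousOn ((hr.inv₀ hrne).continuousOn) hk
  have hint : ∀ a b : ℝ, IntervalIntegrable (fun t => q t / r t) volume a b := fun a b =>
    (hgloc.integrableOn_isCompact isCompact_uIcc).intervalIntegrable
  have hint₂ : ∀ a b : ℝ, IntervalIntegrable (fun t => q₂ t / r t) volume a b := fun a b =>
    (hg₂loc.integrableOn_isCompact isCompact_uIcc).intervalIntegrable
  have hg₁c : Continuous (fun t => q₁ t / r t) := hq₁c.div hr hrne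
  have hgnn : ∀ t, 0 ≤ q t / r t := fun t => div_nonneg (hqnn t) (hrpos t).le
  -- primitive H
  have hHc : Continuous fun u => ∫ t in (0:ℝ)..u, q t / r t :=
    intervalIntegral.continuous_primitive hint 0
  have hHadd : ∀ a b : ℝ, (∫ t in a..b, q t / r t)
      = (∫ t in (0:ℝ)..b, q t / r t) - ∫ t in (0:ℝ)..a, q t / r t := by
    intro a b
    have h := intervalIntegral.integral_add_adjacent_intervals (hint 0 a) (hint a b)
    linarith
  have hHm : Monotone fun u => ∫ t in (0:ℝ)..u, q t / r t := by
    intro a b hab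
    have h := hHadd a b
    have h2 : (0:ℝ) ≤ ∫ t in a..b, q t / r t :=
      intervalIntegral.integral_nonneg hab fun t _ => hgnn t
    simp only
    linarith
  have hGc : ∀ x : ℝ, Continuous fun d => ∫ t in (x - d)..(x + d), q t / r t := by
    intro x
    have : (fun d => ∫ t in (x - d)..(x + d), q t / r t)
        = fun d => (∫ t in (0:ℝ)..(x + d), q t / r t) - ∫ t in (0:ℝ)..(x - d), q t / r t := by
      funext d; exact hHadd _ _
    rw [this]
    exact (hHc.comp (continuous_const.add continuous_id)).sub
      (hHc.comp (continuous_const.sub continuous_id))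
  have hG0 : ∀ x : ℝ, (∫ t in (x - (0:ℝ))..(x + (0:ℝ)), q t / r t) = 0 := by
    intro x; simp
  have hGmono : ∀ x : ℝ, Monotone fun d => ∫ t in (x - d)..(x + d), q t / r t := by
    intro x d d' hdd'
    simp only
    rw [hHadd (x - d) (x + d), hHadd (x - d') (x + d')]
    have h1 := hHm (show x + d ≤ x + d' by linarith)
    have h2 := hHm (show x - d' ≤ x - d by linarith)
    simp only at h1 h2
    linarith
  -- the key identity : ∫_{x-w}^{x+w} q/r = 2cw + E₁(w) + E₂(w)
  have hE : ∀ x w : ℝ, (∫ t in (x - w)..(x + w), q t / r t)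
      = 2 * (q₁ x / r x) * w
        + (∫ t in (0:ℝ)..w,
            (q₁ (x + t) / r (x + t) - 2 * (q₁ x / r x) + q₁ (x - t) / r (x - t)))
        + ∫ t in (x - w)..(x + w), q₂ t / r t := by
    intro x w
    have hsplit : (∫ t in (x - w)..(x + w), q t / r t)
        = (∫ t in (x - w)..(x + w), q₁ t / r t) + ∫ t in (x - w)..(x + w), q₂ t / r t := by
      rw [← intervalIntegral.integral_add ((hg₁c.intervalIntegrable _ _)) (hint₂ _ _)]
      apply intervalIntegral.integral_congr
      intro t _
      show q t / r t = q₁ t / r t + q₂ t / r t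
      rw [hq12 t, add_div]
    have hc1 : Continuous fun t => q₁ (x + t) / r (x + t) :=
      hg₁c.comp (continuous_const.add continuous_id)
    have hc2 : Continuous fun t => q₁ (x - t) / r (x - t) :=
      hg₁c.comp (continuous_const.sub continuous_id)
    have e1 : (∫ t in (0:ℝ)..w,
          (q₁ (x + t) / r (x + t) - 2 * (q₁ x / r x) + q₁ (x - t) / r (x - t)))
        = (∫ t in (0:ℝ)..w, q₁ (x + t) / r (x + t))
          - (∫ t in (0:ℝ)..w, (2 * (q₁ x / r x) : ℝ))
          + ∫ t in (0:ℝ)..w, q₁ (x - t) / r (x - t) := by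
      rw [← intervalIntegral.integral_sub (hc1.intervalIntegrable _ _) intervalIntegrable_const,
        ← intervalIntegral.integral_add
          ((hc1.intervalIntegrable _ _).sub intervalIntegrable_const)
          (hc2.intervalIntegrable _ _)]
    have e2 : (∫ t in (0:ℝ)..w, q₁ (x + t) / r (x + t)) = ∫ t in x..(x + w), q₁ t / r t := by
      rw [intervalIntegral.integral_comp_add_left (fun t => q₁ t / r t) x, add_zero]
    have e3 : (∫ t in (0:ℝ)..w, q₁ (x - t) / r (x - t)) = ∫ t in (x - w)..x, q₁ t / r t := by
      rw [intervalIntegral.integral_comp_sub_left (fun t => q₁ t / r t) x, sub_zero]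
    have e4 : (∫ t in (0:ℝ)..w, (2 * (q₁ x / r x) : ℝ)) = 2 * (q₁ x / r x) * w := by
      rw [intervalIntegral.integral_const, smul_eq_mul]
      ring
    have e5 : (∫ t in (x - w)..x, q₁ t / r t) + (∫ t in x..(x + w), q₁ t / r t)
        = ∫ t in (x - w)..(x + w), q₁ t / r t :=
      intervalIntegral.integral_add_adjacent_intervals
        (hg₁c.intervalIntegrable _ _) (hg₁c.intervalIntegrable _ _)
    rw [hsplit]
    rw [e1, e2, e3, e4] at *
    linarith
  -- κ bounds
  have hzpos : ∀ x : ℝ, 0 < 2 * r x / q₁ x := fun x =>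
    div_pos (by linarith [hrpos x]) (hq₁pos x)
  have hcs : ∀ x : ℝ, CompactSpace {z : ℝ // |z| ≤ 2 * r x / q₁ x} := by
    intro x
    have h : IsCompact {z : ℝ | |z| ≤ 2 * r x / q₁ x} := by
      rw [show {z : ℝ | |z| ≤ 2 * r x / q₁ x}
          = Icc (-(2 * r x / q₁ x)) (2 * r x / q₁ x) from by
            ext z; simp only [mem_setOf_eq, mem_Icc]; exact abs_le]
      exact isCompact_Icc
    exact isCompact_iff_compactSpace.mp h
  have hκ₁b : ∀ x w : ℝ, |w| ≤ 2 * r x / q₁ x →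
      |∫ t in (0:ℝ)..w,
        (q₁ (x + t) / r (x + t) - 2 * (q₁ x / r x) + q₁ (x - t) / r (x - t))| ≤ κ₁ x := by
    intro x w hw
    rw [hκ₁def x]
    haveI := hcs x
    have hFc : Continuous fun t =>
        q₁ (x + t) / r (x + t) - 2 * (q₁ x / r x) + q₁ (x - t) / r (x - t) :=
      ((hg₁c.comp (continuous_const.add continuous_id)).sub continuous_const).add
        (hg₁c.comp (continuous_const.sub continuous_id))
    have hcont : Continuous fun z : {z : ℝ // |z| ≤ 2 * r x / q₁ x} =>
        |∫ t in (0:ℝ)..(z:ℝ),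
          (q₁ (x + t) / r (x + t) - 2 * (q₁ x / r x) + q₁ (x - t) / r (x - t))| :=
      ((intervalIntegral.continuous_primitive
        (fun a b => hFc.intervalIntegrable a b) 0).comp continuous_subtype_val).abs
    exact le_ciSup (isCompact_range hcont).bddAbove (⟨w, hw⟩ : {z : ℝ // |z| ≤ 2 * r x / q₁ x})
  have hκ₂b : ∀ x w : ℝ, |w| ≤ 2 * r x / q₁ x →
      |∫ t in (x - w)..(x + w), q₂ t / r t| ≤ κ₂ x := by
    intro x w hw
    rw [hκ₂def x]
    haveI := hcs x
    have hH₂c : Continuous fun u => ∫ t in (0:ℝ)..u, q₂ t / r t :=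
      intervalIntegral.continuous_primitive hint₂ 0
    have hcont : Continuous fun z : {z : ℝ // |z| ≤ 2 * r x / q₁ x} =>
        |∫ t in (x - (z:ℝ))..(x + (z:ℝ)), q₂ t / r t| := by
      have key : (fun w : ℝ => ∫ t in (x - w)..(x + w), q₂ t / r t)
          = fun w => (∫ t in (0:ℝ)..(x + w), q₂ t / r t)
              - ∫ t in (0:ℝ)..(x - w), q₂ t / r t := by
        funext w
        have h := intervalIntegral.integral_add_adjacent_intervals
          (hint₂ 0 (x - w)) (hint₂ (x - w) (x + w))
        linarith
      have hcont' : Continuous fun w : ℝ => ∫ t in (x - w)..(x + w), q₂ t / r t := by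
        rw [key]
        exact (hH₂c.comp (continuous_const.add continuous_id)).sub
          (hH₂c.comp (continuous_const.sub continuous_id))
      exact ((hcont'.comp continuous_subtype_val)).abs
    exact le_ciSup (isCompact_range hcont).bddAbove (⟨w, hw⟩ : {z : ℝ // |z| ≤ 2 * r x / q₁ x})
  have hκnn : ∀ x : ℝ, 0 ≤ κ₁ x ∧ 0 ≤ κ₂ x := by
    intro x
    constructor
    · have h := hκ₁b x 0 (by simpa using (hzpos x).le)
      simp only [intervalIntegral.integral_same, abs_zero] at h
      exact h
    · have h := hκ₂b x 0 (by simpa using (hzpos x).le)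
      simp only [sub_zero, add_zero, intervalIntegral.integral_same, abs_zero] at h
      exact h
  -- key per-point lemma
  have keyA : ∀ x : ℝ, κ₁ x + κ₂ x < 1/2 →
      |q₁ x / r x * dfun r q x - 1| ≤ 1 * (κ₁ x + κ₂ x) ∧
      1/2 ≤ q₁ x / r x * dfun r q x ∧ q₁ x / r x * dfun r q x ≤ 3/2 := by
    intro x hκ
    have hz : 0 < 2 * r x / q₁ x := hzpos x
    have hcz : q₁ x / r x * (2 * r x / q₁ x) = 2 := by
      rw [div_mul_div_comm, div_eq_iff (mul_ne_zero (hrne x) (hq₁ne x))]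
      ring
    have hE₁ := abs_le.mp (hκ₁b x (2 * r x / q₁ x) (by rw [abs_of_pos hz]))
    have hE₂ := abs_le.mp (hκ₂b x (2 * r x / q₁ x) (by rw [abs_of_pos hz]))
    have hGz : 2 ≤ ∫ t in (x - 2 * r x / q₁ x)..(x + 2 * r x / q₁ x), q t / r t := by
      have h := hE x (2 * r x / q₁ x)
      have hc4 : 2 * (q₁ x / r x) * (2 * r x / q₁ x) = 4 := by
        nlinarith [hcz]
      rw [h, hc4]
      linarith [(hκnn x).1, (hκnn x).2, hE₁.1, hE₂.1]
    obtain ⟨hdpos', hdle', hdeq'⟩ := sInf_root_spec (hGc x) (hG0 x) hz.le hGz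
    have hdpos : 0 < dfun r q x := hdpos'
    have hdle : dfun r q x ≤ 2 * r x / q₁ x := hdle'
    have hdeq : (∫ t in (x - dfun r q x)..(x + dfun r q x), q t / r t) = 2 := hdeq'
    have habs : |dfun r q x| ≤ 2 * r x / q₁ x := by rw [abs_of_pos hdpos]; exact hdle
    have hE₁d := abs_le.mp (hκ₁b x (dfun r q x) habs)
    have hE₂d := abs_le.mp (hκ₂b x (dfun r q x) habs)
    have hid := hE x (dfun r q x)
    rw [hdeq] at hid
    have hbound : |q₁ x / r x * dfun r q x - 1| ≤ (κ₁ x + κ₂ x) / 2 := by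
      rw [abs_le]
      constructor <;> nlinarith [hE₁d.1, hE₁d.2, hE₂d.1, hE₂d.2]
    have habsle := abs_le.mp hbound
    refine ⟨le_trans hbound (by linarith [(hκnn x).1, (hκnn x).2]), by linarith [habsle.1],
      by linarith [habsle.2]⟩
  -- choose x₀
  have hev : ∃ x₀ : ℝ, 0 < x₀ ∧ ∀ x : ℝ, x₀ ≤ |x| → κ₁ x + κ₂ x < 1/2 := by
    have htop : ∀ᶠ x in atTop, κ₁ x + κ₂ x < 1/2 := by
      have h := hκ₁top.add hκ₂top
      rw [add_zero] at h
      exact h.eventually_lt_const (by norm_num)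
    have hbot : ∀ᶠ x in atBot, κ₁ x + κ₂ x < 1/2 := by
      have h := hκ₁bot.add hκ₂bot
      rw [add_zero] at h
      exact h.eventually_lt_const (by norm_num)
    obtain ⟨A, hA⟩ := eventually_atTop.mp htop
    obtain ⟨B, hB⟩ := eventually_atBot.mp hbot
    refine ⟨max 1 (max A (-B)), lt_of_lt_of_le one_pos (le_max_left _ _), fun x hx => ?_⟩
    rcases le_or_gt 0 x with h0 | h0
    · have hAx : A ≤ x := by
        have h1 := le_trans (le_max_left A (-B)) (le_max_right 1 (max A (-B)))
        rw [abs_of_nonneg h0] at hx; linarith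
      exact hA x hAx
    · have hBx : x ≤ B := by
        have h1 := le_trans (le_max_right A (-B)) (le_max_right 1 (max A (-B)))
        rw [abs_of_neg h0] at hx; linarith
      exact hB x hBx
  obtain ⟨x₀, hx₀pos, hx₀⟩ := hev
  refine ⟨⟨1, one_pos, x₀, hx₀pos, fun x hx => (keyA x (hx₀ x hx)).1⟩, ?_⟩
  -- part (b)
  -- divergence: ∃ n, ∫_{-n}^0 q/r ≥ 2
  have hDex : ∃ n : ℕ, 2 ≤ ∫ t in (-(n:ℝ))..0, q t / r t := by
    by_contra hcon
    push_neg at hcon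
    have heq : ∀ n : ℕ, (∫⁻ t in Ioc (-(n:ℝ)) 0, ENNReal.ofReal (q t / r t))
        = ENNReal.ofReal (∫ t in (-(n:ℝ))..0, q t / r t) := by
      intro n
      have hIcc : IntegrableOn (fun t => q t / r t) (Ioc (-(n:ℝ)) 0) volume := (hint _ _).1
      rw [intervalIntegral.integral_of_le (by simp : (-(n:ℝ)) ≤ 0)]
      exact (ofReal_integral_eq_lintegral_ofReal hIcc
        (Filter.Eventually.of_forall fun t => hgnn t)).symm
    have hU : (⋃ n : ℕ, Ioc (-(n:ℝ)) 0) = Iic (0:ℝ) := by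
      ext t
      simp only [mem_iUnion, mem_Ioc, mem_Iic]
      constructor
      · rintro ⟨n, _, h⟩; exact h
      · intro h
        refine ⟨⌊-t⌋₊ + 1, ?_, h⟩
        have h2 := Nat.lt_floor_add_one (-t)
        push_cast
        linarith
    have hdir : Directed (· ⊆ ·) fun n : ℕ => Ioc (-(n:ℝ)) 0 := by
      intro m n
      refine ⟨max m n, Ioc_subset_Ioc_left ?_, Ioc_subset_Ioc_left ?_⟩
      · exact neg_le_neg (by exact_mod_cast le_max_left m n)
      · exact neg_le_neg (by exact_mod_cast le_max_right m n)
    have hsup : (∫⁻ t in Iic (0:ℝ), ENNReal.ofReal (q t / r t))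
        = ⨆ n : ℕ, ∫⁻ t in Ioc (-(n:ℝ)) 0, ENNReal.ofReal (q t / r t) := by
      rw [← hU]
      exact setLIntegral_iUnion_of_directed _ hdir
    have hle : (∫⁻ t in Iic (0:ℝ), ENNReal.ofReal (q t / r t)) ≤ ENNReal.ofReal 2 := by
      rw [hsup]
      exact iSup_le fun n => by rw [heq n]; exact ENNReal.ofReal_le_ofReal (hcon n).le
    have htop : (∫⁻ t in Iic (0:ℝ), ENNReal.ofReal (q t / r t)) = ⊤ := by
      refine top_le_iff.mp ?_
      rw [← hS1]
      exact lintegral_mono_set Iio_subset_Iic_self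
    rw [htop] at hle
    exact absurd hle (by simp)
  obtain ⟨n, hn⟩ := hDex
  -- uniform upper bound D for dfun on K = Icc (-x₀) x₀
  have hDpos : (0:ℝ) < (n:ℝ) + x₀ := by positivity
  have hGD : ∀ x : ℝ, |x| ≤ x₀ → 2 ≤ ∫ t in (x - ((n:ℝ) + x₀))..(x + ((n:ℝ) + x₀)), q t / r t := by
    intro x hx
    have hx1 : x - ((n:ℝ) + x₀) ≤ -(n:ℝ) := by
      have := (abs_le.mp hx).2; linarith
    have hx2 : (0:ℝ) ≤ x + ((n:ℝ) + x₀) := by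
      have := (abs_le.mp hx).1
      have : (0:ℝ) ≤ (n:ℝ) := Nat.cast_nonneg n
      linarith [(abs_le.mp hx).1]
    have ha := intervalIntegral.integral_add_adjacent_intervals
      (hint (x - ((n:ℝ) + x₀)) (-(n:ℝ))) (hint (-(n:ℝ)) 0)
    have hb := intervalIntegral.integral_add_adjacent_intervals
      (hint (x - ((n:ℝ) + x₀)) 0) (hint 0 (x + ((n:ℝ) + x₀)))
    have p1 : (0:ℝ) ≤ ∫ t in (x - ((n:ℝ) + x₀))..(-(n:ℝ)), q t / r t :=
      intervalIntegral.integral_nonneg hx1 fun t _ => hgnn t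
    have p2 : (0:ℝ) ≤ ∫ t in (0:ℝ)..(x + ((n:ℝ) + x₀)), q t / r t :=
      intervalIntegral.integral_nonneg hx2 fun t _ => hgnn t
    linarith
  -- min and max of q₁/r on K
  have hKne : (Icc (-x₀) x₀).Nonempty := ⟨0, by constructor <;> linarith⟩
  obtain ⟨xm, hxmK, hxm⟩ := isCompact_Icc.exists_isMinOn hKne hg₁c.continuousOn
  obtain ⟨xM, hxMK, hxM⟩ := isCompact_Icc.exists_isMaxOn hKne hg₁c.continuousOn
  have hmpos : 0 < q₁ xm / r xm := div_pos (hq₁pos xm) (hrpos xm)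
  have hMnn : 0 ≤ q₁ xM / r xM := (div_pos (hq₁pos xM) (hrpos xM)).le
  -- uniform lower bound δ on K
  have hUC := (isCompact_Icc (a := -(x₀+1)) (b := x₀+1)).uniformContinuousOn_of_continuous
    hHc.continuousOn
  obtain ⟨δ₀, hδ₀pos, hδ₀⟩ := (Metric.uniformContinuousOn_iff.mp hUC) 2 (by norm_num)
  set δ : ℝ := min 1 (δ₀ / 3) with hδdef
  have hδpos : 0 < δ := lt_min one_pos (by linarith)
  have hδ1 : δ ≤ 1 := min_le_left _ _
  have hδ3 : δ ≤ δ₀ / 3 := min_le_right _ _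
  have hGδ : ∀ x : ℝ, |x| ≤ x₀ → (∫ t in (x - δ)..(x + δ), q t / r t) < 2 := by
    intro x hx
    have hmem1 : x + δ ∈ Icc (-(x₀+1)) (x₀+1) := by
      have := abs_le.mp hx; constructor <;> linarith
    have hmem2 : x - δ ∈ Icc (-(x₀+1)) (x₀+1) := by
      have := abs_le.mp hx; constructor <;> linarith
    have hdist : dist (x + δ) (x - δ) < δ₀ := by
      rw [Real.dist_eq]
      rw [abs_of_nonneg (by linarith : (0:ℝ) ≤ (x + δ) - (x - δ))]
      linarith
    have h := hδ₀ _ hmem1 _ hmem2 hdist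
    rw [Real.dist_eq] at h
    rw [hHadd (x - δ) (x + δ)]
    calc (∫ t in (0:ℝ)..(x + δ), q t / r t) - ∫ t in (0:ℝ)..(x - δ), q t / r t
        ≤ |(∫ t in (0:ℝ)..(x + δ), q t / r t) - ∫ t in (0:ℝ)..(x - δ), q t / r t| := le_abs_self _
      _ < 2 := h
  -- assemble c₂
  set Mp : ℝ := q₁ xM / r xM with hMpdef
  set m : ℝ := q₁ xm / r xm with hmdef
  have hmδpos : 0 < m * δ := mul_pos hmpos hδpos
  refine ⟨max 2 (max (Mp * ((n:ℝ) + x₀)) (m * δ)⁻¹), le_trans one_le_two (le_max_left _ _),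
    fun x => ?_⟩
  set c₂ : ℝ := max 2 (max (Mp * ((n:ℝ) + x₀)) (m * δ)⁻¹) with hc₂def
  have hc₂2 : (2:ℝ) ≤ c₂ := le_max_left _ _
  have hc₂pos : 0 < c₂ := by linarith
  rcases le_total x₀ |x| with hbig | hsmall
  · obtain ⟨_, hlow, hhigh⟩ := keyA x (hx₀ x hbig)
    constructor
    · calc c₂⁻¹ ≤ 2⁻¹ := inv_anti₀ two_pos hc₂2
        _ ≤ q₁ x / r x * dfun r q x := by rw [show (2:ℝ)⁻¹ = 1/2 by norm_num]; exact hlow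
    · linarith
  · -- x ∈ K
    have hxK : x ∈ Icc (-x₀) x₀ := by
      have := abs_le.mp hsmall; exact ⟨this.1, this.2⟩
    obtain ⟨hdpos', hdle', hdeq'⟩ := sInf_root_spec (hGc x) (hG0 x) hDpos.le (hGD x hsmall)
    have hdpos : 0 < dfun r q x := hdpos'
    have hdle : dfun r q x ≤ (n:ℝ) + x₀ := hdle'
    have hdeq : (∫ t in (x - dfun r q x)..(x + dfun r q x), q t / r t) = 2 := hdeq'
    have hδd : δ ≤ dfun r q x := by
      by_contra hcon
      push_neg at hcon
      have hmono := hGmono x hcon.le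
      simp only at hmono
      rw [hdeq] at hmono
      linarith [hGδ x hsmall]
    have hpxm : m ≤ q₁ x / r x := isMinOn_iff.mp hxm x hxK
    have hpxM : q₁ x / r x ≤ Mp := isMaxOn_iff.mp hxM x hxK
    have hlow : m * δ ≤ q₁ x / r x * dfun r q x :=
      mul_le_mul hpxm hδd hδpos.le (le_trans hmpos.le hpxm)
    have hhigh : q₁ x / r x * dfun r q x ≤ Mp * ((n:ℝ) + x₀) :=
      mul_le_mul hpxM hdle hdpos.le hMnn
    constructor
    · have h1 : (m * δ)⁻¹ ≤ c₂ := le_trans (le_max_right _ _) (le_max_right _ _)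
      have h2 : c₂⁻¹ ≤ m * δ := by
        rw [← inv_inv (m * δ)]
        exact inv_anti₀ (by positivity) h1
      linarith
    · exact le_trans hhigh (le_trans (le_max_left _ _) (le_max_right _ _))
end
end
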